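/- arXiv:2307.00683 — 2 statements merged into one kernel-verified Lean document; each statement's English description precedes it below -/
import Mathlib

section
/- Let μ be the Gibbs distribution of a spin system on a graph G=(V,E), let V_1,…,V_k be disjoint independent sets with V = V_1 ∪ ⋯ ∪ V_k, let S ⊆ V, and let S_1,…,S_m be the connected components of the subgraph induced by S. For each S_i, let Γ(S_i) be the minimum value such that for every pinning τ on V∖S_i and every function g : Ω^τ_{S_i} → R_{≥0}, Ent^τ_{S_i}(g) ≤ Γ(S_i) Σ_{j=1}^{k} E_{ξ∼μ^τ_{S_i∖V_j}}[ Ent^{ξ∪τ}_{V_j∩S_i}( g^{ξ}_{S_i∩V_j} ) ]. Then for every function f : Ω → R_{≥0}, E_{τ∼μ_{V∖S}}[ Ent^τ_S(f^τ) ] ≤ ( max_{S_i ⊆ S} Γ(S_i) ) · Σ_{j=1}^{k} E_{τ∼μ_{V∖V_j}}[ Ent^τ_{V_j}(f^τ) ]. -/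
open Finset

attribute [local instance] Classical.propDecidable

noncomputable section

namespace SpinGraph

/-- Spin configurations: assignments of one of `q` spins to each vertex. -/
abbrev Conf (V : Type*) (q : ℕ) := V → Fin q

variable {V : Type*} [Fintype V] [DecidableEq V] {q : ℕ}

/-- `μ` is a probability distribution on configurations. -/
def IsDist (μ : Conf V q → ℝ) : Prop :=
  (∀ σ, 0 ≤ μ σ) ∧ ∑ σ : Conf V q, μ σ = 1

/-- Probability (under `μ`) of agreeing with `τ` on `Λ`. -/
def agreeProb (μ : Conf V q → ℝ) (Λ : Finset V) (τ : Conf V q) : ℝ :=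
  ∑ σ ∈ univ.filter (fun σ : Conf V q => ∀ v ∈ Λ, σ v = τ v), μ σ

/-- Conditional probability of the event `E` given the pinning `τ` on `Λ`. -/
def condProb (μ : Conf V q → ℝ) (Λ : Finset V) (τ : Conf V q) (E : Conf V q → Prop) : ℝ :=
  (∑ σ ∈ univ.filter (fun σ : Conf V q => E σ ∧ ∀ v ∈ Λ, σ v = τ v), μ σ) / agreeProb μ Λ τ

/-- The conditional distribution given the pinning `τ` on `Λ`. -/
def condDist (μ : Conf V q → ℝ) (Λ : Finset V) (τ : Conf V q) : Conf V q → ℝ :=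
  fun σ => if ∀ v ∈ Λ, σ v = τ v then μ σ / agreeProb μ Λ τ else 0

/-- `μ` is `b`-marginally bounded. -/
def MargBounded (b : ℝ) (μ : Conf V q → ℝ) : Prop :=
  ∀ (Λ : Finset V) (τ : Conf V q), 0 < agreeProb μ Λ τ →
    ∀ v, v ∉ Λ → ∀ s : Fin q,
      0 < condProb μ Λ τ (fun σ => σ v = s) → b ≤ condProb μ Λ τ (fun σ => σ v = s)

/-- Vertex-spin pairs consistent with the pinning `τ` on `Λ`. -/
def Pairs (μ : Conf V q → ℝ) (Λ : Finset V) (τ : Conf V q) : Type _ :=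
  {p : V × Fin q // p.1 ∉ Λ ∧ 0 < condProb μ Λ τ (fun σ => σ p.1 = p.2)}

instance (μ : Conf V q → ℝ) (Λ : Finset V) (τ : Conf V q) : Finite (Pairs μ Λ τ) := by
  unfold Pairs; infer_instance

noncomputable instance (μ : Conf V q → ℝ) (Λ : Finset V) (τ : Conf V q) :
    Fintype (Pairs μ Λ τ) := Fintype.ofFinite _

/-- The signed pairwise influence matrix associated with the pinning `τ` on `Λ`. -/
def influence (μ : Conf V q → ℝ) (Λ : Finset V) (τ : Conf V q) :
    Matrix (Pairs μ Λ τ) (Pairs μ Λ τ) ℝ :=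
  fun p r =>
    if p.1.1 = r.1.1 then 0
    else
      condProb μ (insert p.1.1 Λ) (Function.update τ p.1.1 p.1.2)
          (fun σ => σ r.1.1 = r.1.2) -
        condProb μ Λ τ (fun σ => σ r.1.1 = r.1.2)

/-- `μ` is `η`-spectrally independent: for every pinning, every (real) eigenvalue of the
signed pairwise influence matrix is at most `η`. -/
def SpecInd (η : ℝ) (μ : Conf V q → ℝ) : Prop :=
  ∀ (Λ : Finset V) (τ : Conf V q), 0 < agreeProb μ Λ τ →
    ∀ (lam : ℝ) (x : Pairs μ Λ τ → ℝ), x ≠ 0 →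
      (influence μ Λ τ).mulVec x = lam • x → lam ≤ η

/-- Two configurations differ at exactly one vertex. -/
def differOne (σ σ' : Conf V q) : Prop :=
  ∃ v, σ v ≠ σ' v ∧ ∀ w, w ≠ v → σ w = σ' w

/-- `μ` is totally-connected: for every pinning, the set of consistent configurations is
connected under single-site moves. -/
def TotallyConnected (μ : Conf V q → ℝ) : Prop :=
  ∀ (Λ : Finset V) (τ : Conf V q), 0 < agreeProb μ Λ τ →
    ∀ σ₁ σ₂ : Conf V q,
      0 < μ σ₁ → (∀ v ∈ Λ, σ₁ v = τ v) → 0 < μ σ₂ → (∀ v ∈ Λ, σ₂ v = τ v) →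
      Relation.ReflTransGen
        (fun a b =>
          0 < μ a ∧ 0 < μ b ∧ (∀ v ∈ Λ, a v = τ v) ∧ (∀ v ∈ Λ, b v = τ v) ∧ differOne a b)
        σ₁ σ₂

/-- `μ` is the Gibbs distribution of a spin system on `G`, built from symmetric
(nonnegative) edge potentials and vertex potentials. -/
def IsGibbs (G : SimpleGraph V) (μ : Conf V q → ℝ) : Prop :=
  ∃ (ψ : V → V → Fin q → Fin q → ℝ) (φ : V → Fin q → ℝ),
    (∀ u v a b, 0 ≤ ψ u v a b) ∧
    (∀ u v a b, ψ u v a b = ψ v u b a) ∧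
    (∀ v a, 0 ≤ φ v a) ∧
    ∀ σ,
      μ σ =
        ((∏ v, φ v (σ v)) *
            ∏ p ∈ univ.filter (fun p : V × V => G.Adj p.1 p.2), ψ p.1 p.2 (σ p.1) (σ p.2)) /
          ∑ σ' : Conf V q,
            (∏ v, φ v (σ' v)) *
              ∏ p ∈ univ.filter (fun p : V × V => G.Adj p.1 p.2), ψ p.1 p.2 (σ' p.1) (σ' p.2)

/-- Mean of `f` under `μ`. -/
def mean {C : Type*} [Fintype C] (μ f : C → ℝ) : ℝ := ∑ x, μ x * f x

/-- Entropy functional `Ent_μ(f) = E_μ[f log f] - E_μ[f] log E_μ[f]`. -/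
def ent {C : Type*} [Fintype C] (μ f : C → ℝ) : ℝ :=
  (∑ x, μ x * f x * Real.log (f x)) - mean μ f * Real.log (mean μ f)

/-- Variance of `f` under `μ`. -/
def varFn {C : Type*} [Fintype C] (μ f : C → ℝ) : ℝ :=
  ∑ x, μ x * (f x - mean μ f) ^ 2

/-- Dirichlet form of the reversible chain `P` with stationary distribution `μ`. -/
def dirichlet {C : Type*} [Fintype C] (P : Matrix C C ℝ) (μ f g : C → ℝ) : ℝ :=
  (∑ x, ∑ y, μ x * P x y * (f x - f y) * (g x - g y)) / 2

/-- Total variation distance between two distributions. -/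
def tvDist {C : Type*} [Fintype C] (p r : C → ℝ) : ℝ := (∑ x, |p x - r x|) / 2

/-- Mixing time: least `t` with worst-case total variation distance at most `1/4`. -/
def mixingTime {C : Type*} [Fintype C] (P : Matrix C C ℝ) (μ : C → ℝ) : ℕ :=
  sInf {t : ℕ | ∀ x : C, tvDist (fun y => (P ^ t) x y) μ ≤ 1 / 4}

/-- `E_{τ ∼ μ_{V∖U}}[Ent^τ_U (f^τ)]`: the expected conditional entropy of `f` on the
block `U`, over a pinning of `V ∖ U` drawn from the marginal of `μ`. -/
def blockEnt (μ : Conf V q → ℝ) (U : Finset V) (f : Conf V q → ℝ) : ℝ :=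
  ∑ τ : Conf V q, μ τ * ent (condDist μ Uᶜ τ) f

/-- `G` has maximum degree at most `Δ`. -/
def degLE (G : SimpleGraph V) (Δ : ℕ) : Prop :=
  ∀ v, (univ.filter (fun w => G.Adj v w)).card ≤ Δ

/-- `U` is an independent set of `G`. -/
def IndepSet (G : SimpleGraph V) (U : Finset V) : Prop :=
  ∀ u ∈ U, ∀ v ∈ U, ¬G.Adj u v

/-- The support of `μ`. -/
def Supp (μ : Conf V q → ℝ) : Type _ := {σ : Conf V q // 0 < μ σ}

instance (μ : Conf V q → ℝ) : Finite (Supp μ) := by unfold Supp; infer_instance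

noncomputable instance (μ : Conf V q → ℝ) : Fintype (Supp μ) := Fintype.ofFinite _

/-- `μ` as a distribution on its support. -/
def suppDist (μ : Conf V q → ℝ) : Supp μ → ℝ := fun σ => μ σ.1

/-- Heat-bath update at the vertex `v` (on the support of `μ`). -/
def siteUpdate (μ : Conf V q → ℝ) (v : V) : Matrix (Supp μ) (Supp μ) ℝ :=
  fun σ σ' =>
    if ∀ w, w ≠ v → σ.1 w = σ'.1 w then
      μ σ'.1 / ∑ a : Fin q, μ (Function.update σ.1 v a)
    else 0

/-- The symmetrized systematic scan dynamics for the ordering `l`: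
update the vertices in the order `l`, then in the reverse order. -/
def scanMatrix (μ : Conf V q → ℝ) (l : List V) : Matrix (Supp μ) (Supp μ) ℝ :=
  (l.map (siteUpdate μ)).prod * (l.reverse.map (siteUpdate μ)).prod

/-- `l` is an ordering of the vertices. -/
def IsOrdering (l : List V) : Prop := l.Nodup ∧ ∀ v : V, v ∈ l

/-- The spin system is monotone: there are linear orders of the spins at each vertex
(encoded by relabelling permutations) such that conditional distributions given larger
pinnings stochastically dominate those given smaller pinnings. -/
def MonotoneSystem (μ : Conf V q → ℝ) : Prop :=
  ∃ e : V → Equiv.Perm (Fin q),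
    ∀ (Λ : Finset V) (τ₁ τ₂ : Conf V q),
      0 < agreeProb μ Λ τ₁ → 0 < agreeProb μ Λ τ₂ →
      (∀ v ∈ Λ, e v (τ₂ v) ≤ e v (τ₁ v)) →
      ∀ f : Conf V q → ℝ,
        (∀ σ σ' : Conf V q, (∀ v, e v (σ v) ≤ e v (σ' v)) → f σ ≤ f σ') →
        mean (condDist μ Λ τ₂) f ≤ mean (condDist μ Λ τ₁) f

/-- Heat-bath update on the block `B` (on the support of `μ`). -/
def blockUpdate (μ : Conf V q → ℝ) (B : Finset V) : Matrix (Supp μ) (Supp μ) ℝ :=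
  fun σ σ' =>
    if ∀ w, w ∉ B → σ.1 w = σ'.1 w then
      μ σ'.1 / ∑ ρ ∈ univ.filter (fun ρ : Conf V q => ∀ w, w ∉ B → ρ w = σ.1 w), μ ρ
    else 0

/-- Heat-bath update on the block `B` (on the full configuration space). -/
def blockUpdateFull (μ : Conf V q → ℝ) (B : Finset V) : Matrix (Conf V q) (Conf V q) ℝ :=
  fun σ σ' =>
    if ∀ w, w ∉ B → σ w = σ' w then
      μ σ' / ∑ ρ ∈ univ.filter (fun ρ : Conf V q => ∀ w, w ∉ B → ρ w = σ w), μ ρ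
    else 0

/-- The (heat-bath) Glauber dynamics for `μ`. -/
def glauber (μ : Conf V q → ℝ) : Matrix (Supp μ) (Supp μ) ℝ :=
  fun σ σ' =>
    (Fintype.card V : ℝ)⁻¹ *
      ∑ v : V,
        if ∀ w, w ≠ v → σ.1 w = σ'.1 w then
          μ σ'.1 / ∑ a : Fin q, μ (Function.update σ.1 v a)
        else 0

/-- The set of monochromatic edges of `G` in the configuration `σ`. -/
def monoEdges (G : SimpleGraph V) (σ : Conf V q) : Finset (Sym2 V) :=
  univ.filter (fun e : Sym2 V => e ∈ G.edgeSet ∧ ∀ u v : V, s(u, v) = e → σ u = σ v)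

/-- The Gibbs distribution of the `q`-state ferromagnetic Potts model on `G` with
parameter `β` (the Ising model is the case `q = 2`). -/
def pottsDist (G : SimpleGraph V) (q : ℕ) (β : ℝ) : Conf V q → ℝ :=
  fun σ =>
    Real.exp (β * (monoEdges G σ).card) /
      ∑ σ' : Conf V q, Real.exp (β * (monoEdges G σ').card)

/-- The transition matrix of the Swendsen–Wang dynamics for the `q`-state ferromagnetic
Potts model on `G` with parameter `β` (percolation parameter `p = 1 - e^{-β}`). -/
def swMatrix (G : SimpleGraph V) (q : ℕ) (β : ℝ) : Matrix (Conf V q) (Conf V q) ℝ :=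
  fun σ σ' =>
    ∑ A ∈ (monoEdges G σ).powerset,
      (1 - Real.exp (-β)) ^ A.card * Real.exp (-β) ^ ((monoEdges G σ).card - A.card) *
        if ∀ u v : V, (SimpleGraph.fromEdgeSet (A : Set (Sym2 V))).Reachable u v → σ' u = σ' v
        then
          ((q : ℝ))⁻¹ ^ Nat.card (SimpleGraph.fromEdgeSet (A : Set (Sym2 V))).ConnectedComponent
        else 0

end SpinGraph

open SpinGraph

/-- `T` is connected inside itself in `G`. -/
def ConnWithin {V : Type*} (G : SimpleGraph V) (T : Finset V) : Prop :=
  ∀ u ∈ T, ∀ v ∈ T,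
    Relation.ReflTransGen (fun a b => a ∈ T ∧ b ∈ T ∧ G.Adj a b) u v

/-- `T` is a connected component of the subgraph of `G` induced by `S`. -/
def IsComponent {V : Type*} (G : SimpleGraph V) (S T : Finset V) : Prop :=
  T ⊆ S ∧ T.Nonempty ∧ ConnWithin G T ∧ ∀ u ∈ T, ∀ v ∈ S, G.Adj u v → v ∈ T

/-!
A Gibbs weight factors into a part that reads only a set `T` and its outer boundary and a part
that does not read `T`. Hence, given the spins off `T ∪ R`, the spins on non-adjacent sets `T` and
`R` are independent, and block factorization of entropy tensorizes over such pairs. Write `f_T`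
for the conditional expectation of `f` given the spins off `T`. By the chain rule
`E Ent_{T ∪ R}(f) = E Ent_T(f) + E Ent_{T ∪ R}(f_T)`, and since `f_T` does not read `T`, the last
term is `E Ent_R(f_T)`. On a block `Y ⊆ R`, averaging over `T` can only lower the entropy,
`E Ent_Y(f_T) ≤ E Ent_Y(f)`, by convexity of `Ent`; with the chain rule once more this recombines
the blocks `T ∩ V_j` and `R ∩ V_j` into `(T ∪ R) ∩ V_j`. Peeling off the connected components of
`S` one at a time gives the theorem.
-/

open Real

namespace SpinGraph

section Entropy

variable {C : Type*} [Fintype C]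

theorem log_sum_inequality {ι : Type*} (s : Finset ι) {a b : ι → ℝ}
    (ha : ∀ i ∈ s, 0 ≤ a i) (hb : ∀ i ∈ s, 0 ≤ b i) (hab : ∀ i ∈ s, b i = 0 → a i = 0) :
    (∑ i ∈ s, a i) * (log (∑ i ∈ s, a i) - log (∑ i ∈ s, b i)) ≤
      ∑ i ∈ s, a i * (log (a i) - log (b i)) := by
  set A := ∑ i ∈ s, a i
  set B := ∑ i ∈ s, b i
  rcases (sum_nonneg ha).eq_or_lt with hA | hA
  · have ha0 : ∀ i ∈ s, a i = 0 := (sum_eq_zero_iff_of_nonneg ha).1 hA.symm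
    rw [show A = 0 from hA.symm, zero_mul, sum_eq_zero fun i hi => by rw [ha0 i hi, zero_mul]]
  have hB : 0 < B := by
    obtain ⟨i, hi, hai⟩ := exists_lt_of_sum_lt (by simpa using hA : ∑ i ∈ s, (0 : ℝ) < A)
    exact (single_le_sum hb hi).trans_lt' ((hb i hi).lt_of_ne fun h => hai.ne' (hab i hi h.symm))
  -- termwise `log t ≤ t - 1` at `t = (b i / B) / (a i / A)`
  have hterm : ∀ i ∈ s, a i - b i * A / B ≤
      a i * (log (a i) - log (b i)) - a i * (log A - log B) := by
    intro i hi
    rcases (ha i hi).eq_or_lt with hai | hai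
    · rw [← hai]
      have : 0 ≤ b i * A / B := by have := hb i hi; positivity
      linarith
    have hbi : 0 < b i := (hb i hi).lt_of_ne fun h => hai.ne' (hab i hi h.symm)
    have hlog := log_le_sub_one_of_pos (show 0 < b i * A / (a i * B) by positivity)
    rw [log_div (by positivity) (by positivity), log_mul hbi.ne' hA.ne',
      log_mul hai.ne' hB.ne'] at hlog
    have hcancel : a i * (b i * A / (a i * B)) = b i * A / B := by field_simp
    nlinarith [mul_le_mul_of_nonneg_left hlog hai.le]
  have hsum := sum_le_sum hterm
  rw [sum_sub_distrib, sum_sub_distrib, ← sum_div, ← sum_mul, ← sum_mul,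
    mul_div_cancel_left₀ _ hB.ne'] at hsum
  linarith

theorem mean_congr {ν f g : C → ℝ} (h : ∀ x, ν x ≠ 0 → f x = g x) : mean ν f = mean ν g :=
  sum_congr rfl fun x _ => by by_cases hx : ν x = 0 <;> simp [hx, h]

theorem mean_le_mean {ν f g : C → ℝ} (hν : ∀ x, 0 ≤ ν x) (h : ∀ x, ν x ≠ 0 → f x ≤ g x) :
    mean ν f ≤ mean ν g :=
  sum_le_sum fun x _ => by
    by_cases hx : ν x = 0
    · simp [hx]
    · exact mul_le_mul_of_nonneg_left (h x hx) (hν x)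

theorem mean_nonneg {ν f : C → ℝ} (hν : ∀ x, 0 ≤ ν x) (hf : ∀ x, 0 ≤ f x) : 0 ≤ mean ν f :=
  sum_nonneg fun x _ => mul_nonneg (hν x) (hf x)

theorem mean_const {ν : C → ℝ} (hν : ∑ x, ν x = 1) (c : ℝ) : mean ν (fun _ => c) = c := by
  rw [mean, ← sum_mul, hν, one_mul]

theorem mean_sub (ν f g : C → ℝ) : mean ν (fun x => f x - g x) = mean ν f - mean ν g := by
  simp only [mean, mul_sub, sum_sub_distrib]

theorem mean_sum_mul_eq {ν κ : C → ℝ} {K : C → C → ℝ}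
    (hK : ∀ σ, ∑ ρ, ν ρ * K ρ σ = κ σ) (f : C → ℝ) :
    mean ν (fun ρ => ∑ σ, K ρ σ * f σ) = mean κ f := by
  simp only [mean, mul_sum, ← hK, sum_mul]
  rw [sum_comm]
  exact sum_congr rfl fun _ _ => sum_congr rfl fun _ _ => by ring

theorem ent_eq_mean (ν f : C → ℝ) :
    ent ν f = mean ν (fun x => f x * log (f x)) - mean ν f * log (mean ν f) := by
  simp only [ent, mean, mul_assoc]

theorem ent_congr {ν f g : C → ℝ} (h : ∀ x, ν x ≠ 0 → f x = g x) : ent ν f = ent ν g := by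
  rw [ent_eq_mean, ent_eq_mean, mean_congr h, mean_congr fun x hx => by rw [h x hx]]

theorem ent_comp_eq {ν₁ ν₂ : C → ℝ} (e : C → C)
    (h : ∀ F : C → ℝ, mean ν₁ (fun x => F (e x)) = mean ν₂ F) (f : C → ℝ) :
    ent ν₁ (fun x => f (e x)) = ent ν₂ f := by
  rw [ent_eq_mean, ent_eq_mean, h, h fun y => f y * log (f y)]

theorem ent_nonneg {ν f : C → ℝ} (hν : ∀ x, 0 ≤ ν x) (hν₁ : ∑ x, ν x = 1)
    (hf : ∀ x, 0 ≤ f x) : 0 ≤ ent ν f := by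
  have h := log_sum_inequality univ (a := fun x => ν x * f x) (b := ν)
    (fun x _ => mul_nonneg (hν x) (hf x)) (fun x _ => hν x) (fun x _ h => by simp [h])
  have hterm : ∀ x, ν x * f x * (log (ν x * f x) - log (ν x)) = ν x * f x * log (f x) := by
    intro x
    by_cases h0 : ν x * f x = 0
    · simp [h0]
    · rw [log_mul (left_ne_zero_of_mul h0) (right_ne_zero_of_mul h0)]
      ring
  simp only [hterm, hν₁, log_one, sub_zero] at h
  exact sub_nonneg.2 h

theorem ent_sum_le {ι : Type*} {ν : C → ℝ} (hν : ∀ x, 0 ≤ ν x) (s : Finset ι)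
    {p : ι → ℝ} {u : ι → C → ℝ} (hp : ∀ i ∈ s, 0 ≤ p i) (hu : ∀ i ∈ s, ∀ x, 0 ≤ u i x) :
    ent ν (fun x => ∑ i ∈ s, p i * u i x) ≤ ∑ i ∈ s, p i * ent ν (u i) := by
  set F := fun x => ∑ i ∈ s, p i * u i x
  set m := fun i => mean ν (u i)
  have hmean : mean ν F = ∑ i ∈ s, p i * m i := by
    simp only [F, m, mean, mul_sum]
    rw [sum_comm]
    exact sum_congr rfl fun i _ => sum_congr rfl fun x _ => by ring
  have hpoint : ∀ x, ν x ≠ 0 → F x * (log (F x) - log (mean ν F)) ≤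
      ∑ i ∈ s, p i * (u i x * log (u i x) - u i x * log (m i)) := by
    intro x hx
    have hzero : ∀ i ∈ s, p i * m i = 0 → p i * u i x = 0 := by
      intro i hi h
      rcases mul_eq_zero.1 h with h | h
      · simp [h]
      · have := (sum_eq_zero_iff_of_nonneg fun y _ => mul_nonneg (hν y) (hu i hi y)).1 h x
          (mem_univ x)
        simp [(mul_eq_zero.1 this).resolve_left hx]
    rw [hmean]
    refine (log_sum_inequality s (fun i hi => mul_nonneg (hp i hi) (hu i hi x))
      (fun i hi => mul_nonneg (hp i hi) (mean_nonneg hν (hu i hi))) hzero).trans_eq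
      (sum_congr rfl fun i hi => ?_)
    by_cases h : p i * u i x = 0
    · rcases mul_eq_zero.1 h with h | h <;> simp [h]
    · have hm : p i * m i ≠ 0 := fun h' => h (hzero i hi h')
      rw [log_mul (left_ne_zero_of_mul h) (right_ne_zero_of_mul h),
        log_mul (left_ne_zero_of_mul hm) (right_ne_zero_of_mul hm)]
      ring
  have hint := mean_le_mean hν hpoint
  have hlhs : mean ν (fun x => F x * (log (F x) - log (mean ν F))) = ent ν F := by
    simp only [ent_eq_mean, mul_sub, mean_sub]
    simp only [mean, ← mul_assoc, ← sum_mul]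
  have hrhs : mean ν (fun x => ∑ i ∈ s, p i * (u i x * log (u i x) - u i x * log (m i))) =
      ∑ i ∈ s, p i * ent ν (u i) := by
    simp only [ent_eq_mean, m, mean, mul_sum, sum_mul]
    rw [sum_comm]
    refine sum_congr rfl fun i _ => ?_
    rw [← sum_sub_distrib, mul_sum]
    exact sum_congr rfl fun x _ => by ring
  rwa [hlhs, hrhs] at hint

end Entropy

section Components

variable {V : Type*} (G : SimpleGraph V) (S : Finset V)

def componentOf (u : V) : Finset V :=
  S.filter (Relation.ReflTransGen (fun a b => a ∈ S ∧ b ∈ S ∧ G.Adj a b) u)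

variable {G S}

theorem mem_componentOf_self {u : V} (hu : u ∈ S) : u ∈ componentOf G S u :=
  mem_filter.2 ⟨hu, .refl⟩

theorem componentOf_closed {u a b : V} (ha : a ∈ componentOf G S u) (hb : b ∈ S)
    (hab : G.Adj a b) : b ∈ componentOf G S u := by
  obtain ⟨haS, hua⟩ := mem_filter.1 ha
  exact mem_filter.2 ⟨hb, hua.tail ⟨haS, hb, hab⟩⟩

theorem isComponent_componentOf {u : V} (hu : u ∈ S) : IsComponent G S (componentOf G S u) := by
  refine ⟨filter_subset _ _, ⟨u, mem_componentOf_self hu⟩, fun x hx y hy => ?_,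
    fun a ha b hb hab => componentOf_closed ha hb hab⟩
  have hlift : ∀ {w}, Relation.ReflTransGen (fun a b => a ∈ S ∧ b ∈ S ∧ G.Adj a b) u w →
      Relation.ReflTransGen (fun a b => a ∈ componentOf G S u ∧ b ∈ componentOf G S u ∧
        G.Adj a b) u w := by
    intro w huw
    induction huw with
    | refl => exact .refl
    | tail huv hvw ih =>
      exact ih.tail ⟨mem_filter.2 ⟨hvw.1, huv⟩, mem_filter.2 ⟨hvw.2.1, huv.tail hvw⟩, hvw.2.2⟩
  have hxu : Relation.ReflTransGen (fun a b => a ∈ componentOf G S u ∧ b ∈ componentOf G S u ∧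
      G.Adj a b) x u :=
    Relation.reflTransGen_swap.1 <| Relation.ReflTransGen.mono
      (fun a b h => ⟨h.2.1, h.1, h.2.2.symm⟩) _ _ (hlift (mem_filter.1 hx).2)
  exact hxu.trans (hlift (mem_filter.1 hy).2)

theorem componentOf_subset_of_closed {S' : Finset V}
    (hcl : ∀ a ∈ S', ∀ b ∈ S, G.Adj a b → b ∈ S') {u : V} (hu : u ∈ S') :
    componentOf G S u ⊆ S' := by
  rintro x hx
  replace hx := (mem_filter.1 hx).2
  induction hx with
  | refl => exact hu
  | tail _ hvw ih => exact hcl _ ih _ hvw.2.1 hvw.2.2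

end Components

variable {V : Type*} [Fintype V] [DecidableEq V] {q : ℕ}

def agreeSet (W : Finset V) (τ : Conf V q) : Finset (Conf V q) :=
  univ.filter fun σ => ∀ v ∈ W, σ v = τ v

theorem mem_agreeSet {W : Finset V} {τ σ : Conf V q} :
    σ ∈ agreeSet W τ ↔ ∀ v ∈ W, σ v = τ v := by
  simp [agreeSet]

theorem self_mem_agreeSet (W : Finset V) (τ : Conf V q) : τ ∈ agreeSet W τ :=
  mem_agreeSet.2 fun _ _ => rfl

theorem sum_agreeSet_piecewise (W : Finset V) (x y : Conf V q) (F : Conf V q → ℝ) :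
    ∑ σ ∈ agreeSet Wᶜ x, F (W.piecewise σ y) = ∑ σ ∈ agreeSet Wᶜ y, F σ := by
  refine sum_nbij' (fun σ => W.piecewise σ y) (fun σ => W.piecewise σ x) ?_ ?_ ?_ ?_
    fun _ _ => rfl
  all_goals
    intro σ hσ
    simp only [mem_agreeSet, mem_compl] at *
  · intro v hv
    simp [hv]
  · intro v hv
    simp [hv]
  all_goals
    funext v
    by_cases hv : v ∈ W <;> simp [hv, hσ v]

variable {μ : Conf V q → ℝ}

theorem agreeProb_eq_sum (W : Finset V) (τ : Conf V q) :
    agreeProb μ W τ = ∑ σ ∈ agreeSet W τ, μ σ := rfl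

theorem condDist_congr {W : Finset V} {τ τ' : Conf V q} (h : ∀ v ∈ W, τ v = τ' v) :
    condDist μ W τ = condDist μ W τ' := by
  have hset : agreeSet W τ = agreeSet W τ' := by
    ext σ
    simp only [mem_agreeSet]
    exact forall₂_congr fun v hv => by rw [h v hv]
  funext σ
  simp only [condDist, agreeProb_eq_sum, hset, ← mem_agreeSet]

theorem mean_condDist (W : Finset V) (τ : Conf V q) (f : Conf V q → ℝ) :
    mean (condDist μ W τ) f = (∑ σ ∈ agreeSet W τ, μ σ * f σ) / agreeProb μ W τ := by
  simp only [mean, condDist, ite_mul, zero_mul, ← sum_filter, sum_div]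
  exact sum_congr rfl fun σ _ => div_mul_eq_mul_div _ _ _

theorem condDist_nonneg (hμ : ∀ σ, 0 ≤ μ σ) (W : Finset V) (τ σ : Conf V q) :
    0 ≤ condDist μ W τ σ := by
  unfold condDist
  split_ifs
  · exact div_nonneg (hμ σ) (sum_nonneg fun _ _ => hμ _)
  · rfl

theorem le_agreeProb (hμ : ∀ σ, 0 ≤ μ σ) (W : Finset V) (τ : Conf V q) :
    μ τ ≤ agreeProb μ W τ :=
  single_le_sum (fun σ _ => hμ σ) (self_mem_agreeSet W τ)

theorem agreeProb_pos (hμ : ∀ σ, 0 ≤ μ σ) (W : Finset V) {τ : Conf V q} (hτ : 0 < μ τ) :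
    0 < agreeProb μ W τ :=
  hτ.trans_le (le_agreeProb hμ W τ)

theorem sum_condDist {W : Finset V} {τ : Conf V q} (h : agreeProb μ W τ ≠ 0) :
    ∑ σ, condDist μ W τ σ = 1 := by
  have h1 := mean_condDist (μ := μ) W τ fun _ => 1
  simp only [mean, mul_one] at h1
  rw [h1, ← agreeProb_eq_sum, div_self h]

theorem condDist_ne_zero (hμ : ∀ σ, 0 ≤ μ σ) {W : Finset V} {τ σ : Conf V q}
    (h : condDist μ W τ σ ≠ 0) : (∀ v ∈ W, σ v = τ v) ∧ 0 < μ σ := by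
  unfold condDist at h
  split_ifs at h with hσ
  · exact ⟨hσ, (hμ σ).lt_of_ne fun h0 => h (by rw [← h0, zero_div])⟩
  · exact absurd rfl h

theorem sum_mul_condDist (hμ : ∀ σ, 0 ≤ μ σ) {W : Finset V} {g : Conf V q → ℝ}
    (hg : ∀ ρ σ, (∀ v ∈ W, ρ v = σ v) → g ρ = g σ) (σ : Conf V q) :
    ∑ ρ, g ρ * μ ρ * condDist μ W ρ σ = g σ * μ σ := by
  have hterm : ∀ ρ, g ρ * μ ρ * condDist μ W ρ σ =
      if ρ ∈ agreeSet W σ then g σ * μ σ / agreeProb μ W σ * μ ρ else 0 := by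
    intro ρ
    by_cases hρ : ρ ∈ agreeSet W σ
    · have h' := mem_agreeSet.1 hρ
      rw [if_pos hρ, condDist_congr h', condDist, if_pos fun _ _ => rfl, hg ρ σ h']
      ring
    · rw [if_neg hρ, condDist, if_neg, mul_zero]
      exact fun h => hρ (mem_agreeSet.2 fun v hv => (h v hv).symm)
  rw [sum_congr rfl fun ρ _ => hterm ρ, sum_ite_mem, univ_inter, ← mul_sum,
    ← agreeProb_eq_sum]
  by_cases h0 : agreeProb μ W σ = 0
  · have : μ σ = 0 := le_antisymm (h0 ▸ le_agreeProb hμ W σ) (hμ σ)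
    simp [this]
  · field_simp

theorem sum_condDist_mul_condDist (hμ : ∀ σ, 0 ≤ μ σ) {W W' : Finset V} (hW : W ⊆ W')
    (τ σ : Conf V q) :
    ∑ ρ, condDist μ W τ ρ * condDist μ W' ρ σ = condDist μ W τ σ := by
  set g : Conf V q → ℝ := fun ρ => if ∀ v ∈ W, ρ v = τ v then (agreeProb μ W τ)⁻¹ else 0
  have hcond : ∀ ρ, condDist μ W τ ρ = g ρ * μ ρ := fun ρ => by
    simp only [condDist, g]
    split_ifs <;> ring
  simp only [hcond]
  refine sum_mul_condDist hμ (fun ρ σ h => ?_) σ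
  simp only [g]
  congr 1
  exact propext (forall₂_congr fun v hv => by rw [h v (hW hv)])

def condMean (μ : Conf V q → ℝ) (X : Finset V) (f : Conf V q → ℝ) : Conf V q → ℝ :=
  fun σ => mean (condDist μ Xᶜ σ) f

theorem condMean_nonneg (hμ : ∀ σ, 0 ≤ μ σ) (X : Finset V) {f : Conf V q → ℝ}
    (hf : ∀ σ, 0 ≤ f σ) (σ : Conf V q) : 0 ≤ condMean μ X f σ :=
  mean_nonneg (condDist_nonneg hμ _ σ) hf

theorem condMean_congr (X : Finset V) (f : Conf V q → ℝ) {σ σ' : Conf V q}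
    (h : ∀ v ∉ X, σ v = σ' v) : condMean μ X f σ = condMean μ X f σ' := by
  rw [condMean, condDist_congr fun v hv => h v (mem_compl.1 hv)]
  rfl

theorem mean_condMean (hμ : ∀ σ, 0 ≤ μ σ) (X : Finset V) (f : Conf V q → ℝ) :
    mean μ (condMean μ X f) = mean μ f :=
  mean_sum_mul_eq (fun σ => by simpa using sum_mul_condDist hμ (g := 1) (by simp) σ) f

theorem condMean_condMean (hμ : ∀ σ, 0 ≤ μ σ) {X Y : Finset V} (hXY : X ⊆ Y)
    (f : Conf V q → ℝ) : condMean μ Y (condMean μ X f) = condMean μ Y f :=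
  funext fun τ => mean_sum_mul_eq
    (sum_condDist_mul_condDist hμ (compl_subset_compl.2 hXY) τ) f

theorem blockEnt_eq (hμ : ∀ σ, 0 ≤ μ σ) (X : Finset V) (f : Conf V q → ℝ) :
    blockEnt μ X f = mean μ (fun σ => f σ * log (f σ)) -
      mean μ (fun σ => condMean μ X f σ * log (condMean μ X f σ)) := by
  have h : blockEnt μ X f = mean μ (fun τ => condMean μ X (fun σ => f σ * log (f σ)) τ -
      condMean μ X f τ * log (condMean μ X f τ)) := by
    simp only [blockEnt, ent_eq_mean]
    rfl
  rw [h, mean_sub, mean_condMean hμ]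

theorem ent_condDist_nonneg (hμ : ∀ σ, 0 ≤ μ σ) (W : Finset V) (τ : Conf V q)
    {f : Conf V q → ℝ} (hf : ∀ σ, 0 ≤ f σ) : 0 ≤ ent (condDist μ W τ) f := by
  by_cases h : agreeProb μ W τ = 0
  · simp [ent, mean, condDist, h]
  · exact ent_nonneg (condDist_nonneg hμ W τ) (sum_condDist h) hf

theorem blockEnt_nonneg (hμ : ∀ σ, 0 ≤ μ σ) (X : Finset V) {f : Conf V q → ℝ}
    (hf : ∀ σ, 0 ≤ f σ) : 0 ≤ blockEnt μ X f :=
  mean_nonneg hμ fun τ => ent_condDist_nonneg hμ _ τ hf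

theorem blockEnt_chain (hμ : ∀ σ, 0 ≤ μ σ) {X Y : Finset V} (hXY : X ⊆ Y)
    (f : Conf V q → ℝ) : blockEnt μ Y f = blockEnt μ X f + blockEnt μ Y (condMean μ X f) := by
  rw [blockEnt_eq hμ, blockEnt_eq hμ, blockEnt_eq hμ, condMean_condMean hμ hXY]
  ring

theorem blockEnt_mono (hμ : ∀ σ, 0 ≤ μ σ) {X Y : Finset V} (hXY : X ⊆ Y)
    {f : Conf V q → ℝ} (hf : ∀ σ, 0 ≤ f σ) : blockEnt μ X f ≤ blockEnt μ Y f := by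
  rw [blockEnt_chain hμ hXY f]
  linarith [blockEnt_nonneg hμ Y (condMean_nonneg hμ X hf)]

theorem blockEnt_empty (hμ : ∀ σ, 0 ≤ μ σ) (f : Conf V q → ℝ) : blockEnt μ ∅ f = 0 := by
  have hpoint : ∀ σ, μ σ ≠ 0 → condMean μ ∅ f σ = f σ := by
    intro σ hσ
    have hset : agreeSet (∅ : Finset V)ᶜ σ = {σ} := by
      ext ρ
      simp [mem_agreeSet, funext_iff]
    rw [condMean, mean_condDist, agreeProb_eq_sum, hset, sum_singleton, sum_singleton,
      mul_div_cancel_left₀ _ hσ]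
  rw [blockEnt_eq hμ, sub_eq_zero]
  exact mean_congr fun σ hσ => by rw [hpoint σ hσ]

theorem blockEnt_le_of_ent_le (hμ : ∀ σ, 0 ≤ μ σ) {ι : Type*} [Fintype ι] {X : Finset V}
    {U : ι → Finset V} {c : ℝ} {f : Conf V q → ℝ}
    (h : ∀ τ, 0 < μ τ → ent (condDist μ Xᶜ τ) f ≤
      c * ∑ i, condMean μ X (fun ρ => ent (condDist μ (U i)ᶜ ρ) f) τ) :
    blockEnt μ X f ≤ c * ∑ i, blockEnt μ (U i) f := by
  calc blockEnt μ X f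
      ≤ mean μ (fun τ => c * ∑ i, condMean μ X (fun ρ => ent (condDist μ (U i)ᶜ ρ) f) τ) :=
        mean_le_mean hμ fun τ hτ => h τ ((hμ τ).lt_of_ne' hτ)
    _ = c * ∑ i, mean μ (condMean μ X (fun ρ => ent (condDist μ (U i)ᶜ ρ) f)) := by
        simp only [mean, mul_sum]
        rw [sum_comm]
        exact sum_congr rfl fun _ _ => sum_congr rfl fun _ _ => by ring
    _ = c * ∑ i, blockEnt μ (U i) f := by simp only [mean_condMean hμ]; rfl

/-- A product form of the spatial Markov property: given the spins on `P`, the spins on `W` are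
independent of the rest. -/
def Factorizes (μ : Conf V q → ℝ) (W P : Finset V) : Prop :=
  ∃ A B : Conf V q → ℝ, (∀ x y, (∀ v ∈ W ∪ P, x v = y v) → A x = A y) ∧
    (∀ x y, (∀ v ∉ W, x v = y v) → B x = B y) ∧ ∀ x, μ x = A x * B x

theorem Factorizes.mean_condDist_piecewise {W P : Finset V} (hF : Factorizes μ W P)
    {x y : Conf V q} (hxy : ∀ v ∈ P, x v = y v) (hx : agreeProb μ Wᶜ x ≠ 0)
    (hy : agreeProb μ Wᶜ y ≠ 0) (G : Conf V q → ℝ) :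
    mean (condDist μ Wᶜ x) (fun σ => G (W.piecewise σ y)) = mean (condDist μ Wᶜ y) G := by
  obtain ⟨A, B, hA, hB, hAB⟩ := hF
  have hmean : ∀ z, agreeProb μ Wᶜ z ≠ 0 → ∀ F : Conf V q → ℝ, mean (condDist μ Wᶜ z) F =
      (∑ σ ∈ agreeSet Wᶜ z, A σ * F σ) / ∑ σ ∈ agreeSet Wᶜ z, A σ := by
    intro z hz F
    have hBz : ∀ σ ∈ agreeSet Wᶜ z, μ σ = A σ * B z := fun σ hσ => by
      rw [hAB, hB σ z fun v hv => mem_agreeSet.1 hσ v (mem_compl.2 hv)]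
    rw [agreeProb_eq_sum, sum_congr rfl hBz, ← sum_mul] at hz
    rw [mean_condDist, agreeProb_eq_sum, sum_congr rfl hBz, ← sum_mul,
      sum_congr rfl fun σ hσ => by rw [hBz σ hσ, mul_right_comm], ← sum_mul,
      mul_div_mul_right _ _ (right_ne_zero_of_mul hz)]
  have hA' : ∀ σ ∈ agreeSet Wᶜ x, A (W.piecewise σ y) = A σ := by
    intro σ hσ
    refine hA _ _ fun v hv => ?_
    by_cases hvW : v ∈ W
    · simp [hvW]
    · rw [piecewise_eq_of_notMem _ _ _ hvW, mem_agreeSet.1 hσ v (mem_compl.2 hvW),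
        hxy v ((mem_union.1 hv).resolve_left hvW)]
  rw [hmean x hx, hmean y hy, ← sum_agreeSet_piecewise W x y A,
    ← sum_agreeSet_piecewise W x y fun σ => A σ * G σ]
  congr 1 <;> exact sum_congr rfl fun σ hσ => by rw [hA' σ hσ]

theorem Factorizes.ent_condDist_piecewise {W P : Finset V} (hF : Factorizes μ W P)
    {x y : Conf V q} (hxy : ∀ v ∈ P, x v = y v) (hx : agreeProb μ Wᶜ x ≠ 0)
    (hy : agreeProb μ Wᶜ y ≠ 0) (f : Conf V q → ℝ) :
    ent (condDist μ Wᶜ x) (fun σ => f (W.piecewise σ y)) = ent (condDist μ Wᶜ y) f :=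
  ent_comp_eq _ (hF.mean_condDist_piecewise hxy hx hy) f

def BlockFactorizes {ι : Type*} [Fintype ι] (μ : Conf V q → ℝ) (U : ι → Finset V) (c : ℝ)
    (X : Finset V) : Prop :=
  ∀ f : Conf V q → ℝ, (∀ σ, 0 ≤ f σ) → blockEnt μ X f ≤ c * ∑ i, blockEnt μ (X ∩ U i) f

variable {ι : Type*} [Fintype ι] {U : ι → Finset V} {c : ℝ}

theorem blockFactorizes_empty (hμ : ∀ σ, 0 ≤ μ σ) : BlockFactorizes μ U c ∅ :=
  fun f _ => by simp [blockEnt_empty hμ]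

section Gibbs

variable {G : SimpleGraph V}

theorem IsGibbs.factorizes (hG : IsGibbs G μ) {W P : Finset V}
    (hP : ∀ a b, G.Adj a b → a ∈ W → b ∉ W → b ∈ P) : Factorizes μ W P := by
  obtain ⟨ψ, φ, -, -, -, hμ⟩ := hG
  set E := univ.filter fun p : V × V => G.Adj p.1 p.2
  have hnear : ∀ p ∈ E, p.1 ∈ W ∨ p.2 ∈ W → p.1 ∈ W ∪ P ∧ p.2 ∈ W ∪ P := by
    intro p hp hW
    have hadj : G.Adj p.1 p.2 := (mem_filter.1 hp).2
    by_cases h1 : p.1 ∈ W <;> by_cases h2 : p.2 ∈ W <;> simp_all [hP _ _ hadj, hP _ _ hadj.symm]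
  refine ⟨fun x => (∏ v ∈ W, φ v (x v)) *
      ∏ p ∈ E.filter (fun p => p.1 ∈ W ∨ p.2 ∈ W), ψ p.1 p.2 (x p.1) (x p.2),
    fun x => (∏ v ∈ Wᶜ, φ v (x v)) *
      (∏ p ∈ E.filter (fun p => ¬(p.1 ∈ W ∨ p.2 ∈ W)), ψ p.1 p.2 (x p.1) (x p.2)) /
      ∑ σ : Conf V q, (∏ v, φ v (σ v)) * ∏ p ∈ E, ψ p.1 p.2 (σ p.1) (σ p.2), ?_, ?_, ?_⟩
  · intro x y hxy
    dsimp only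
    congr 1
    · exact prod_congr rfl fun v hv => by rw [hxy v (mem_union_left _ hv)]
    · refine prod_congr rfl fun p hp => ?_
      obtain ⟨hpE, hpW⟩ := mem_filter.1 hp
      obtain ⟨h1, h2⟩ := hnear p hpE hpW
      rw [hxy _ h1, hxy _ h2]
  · intro x y hxy
    dsimp only
    congr 2
    · exact prod_congr rfl fun v hv => by rw [hxy v (mem_compl.1 hv)]
    · refine prod_congr rfl fun p hp => ?_
      have hpW := not_or.1 (mem_filter.1 hp).2
      rw [hxy _ hpW.1, hxy _ hpW.2]
  · intro x
    rw [hμ x, ← prod_mul_prod_compl W, ← prod_filter_mul_prod_filter_not E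
      (fun p : V × V => p.1 ∈ W ∨ p.2 ∈ W)]
    ring

theorem IsGibbs.factorizes_of_not_adj (hG : IsGibbs G μ)
    {T R : Finset V} (hadj : ∀ a ∈ T, ∀ b ∈ R, ¬G.Adj a b) : Factorizes μ T (T ∪ R)ᶜ :=
  hG.factorizes fun a b hab ha hb => mem_compl.2 fun h =>
    (mem_union.1 h).elim hb fun hbR => hadj a ha b hbR hab

theorem IsGibbs.mean_condDist_union_compl (hμ : ∀ σ, 0 ≤ μ σ) (hG : IsGibbs G μ)
    {T R : Finset V} (hadj : ∀ a ∈ T, ∀ b ∈ R, ¬G.Adj a b) {F : Conf V q → ℝ}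
    (hF : ∀ x y, (∀ v ∉ T, x v = y v) → F x = F y) {ρ : Conf V q} (hρ : 0 < μ ρ) :
    mean (condDist μ (T ∪ R)ᶜ ρ) F = mean (condDist μ Rᶜ ρ) F := by
  have hfac : Factorizes μ R (T ∪ R)ᶜ := by
    rw [union_comm]
    exact hG.factorizes_of_not_adj fun a ha b hb h => hadj b hb a ha h.symm
  -- the law of the spins on `R` does not depend on the spins on `T`
  have hconst : ∀ ζ, condDist μ (T ∪ R)ᶜ ρ ζ ≠ 0 →
      condMean μ R F ζ = mean (condDist μ Rᶜ ρ) F := by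
    intro ζ hζ
    obtain ⟨hζρ, hζ⟩ := condDist_ne_zero hμ hζ
    rw [condMean, ← hfac.mean_condDist_piecewise hζρ (agreeProb_pos hμ _ hζ).ne'
      (agreeProb_pos hμ _ hρ).ne' F]
    refine mean_congr fun σ hσ => hF _ _ fun v hvT => ?_
    obtain ⟨hσζ, -⟩ := condDist_ne_zero hμ hσ
    by_cases hvR : v ∈ R
    · simp [hvR]
    · rw [piecewise_eq_of_notMem _ _ _ hvR, hσζ v (mem_compl.2 hvR), hζρ v (by simp [hvT, hvR])]
  calc mean (condDist μ (T ∪ R)ᶜ ρ) F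
      = mean (condDist μ (T ∪ R)ᶜ ρ) (condMean μ R F) :=
        (congrFun (condMean_condMean hμ subset_union_right F) ρ).symm
    _ = mean (condDist μ (T ∪ R)ᶜ ρ) (fun _ => mean (condDist μ Rᶜ ρ) F) := mean_congr hconst
    _ = mean (condDist μ Rᶜ ρ) F := mean_const (sum_condDist (agreeProb_pos hμ _ hρ).ne') _

theorem IsGibbs.blockEnt_union_eq (hμ : ∀ σ, 0 ≤ μ σ) (hG : IsGibbs G μ) {T R : Finset V}
    (hadj : ∀ a ∈ T, ∀ b ∈ R, ¬G.Adj a b) {h : Conf V q → ℝ}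
    (hh : ∀ x y, (∀ v ∉ T, x v = y v) → h x = h y) : blockEnt μ (T ∪ R) h = blockEnt μ R h :=
  mean_congr fun ρ hρ => by
    have hρ' := (hμ ρ).lt_of_ne' hρ
    rw [ent_eq_mean, ent_eq_mean, hG.mean_condDist_union_compl hμ hadj hh hρ',
      hG.mean_condDist_union_compl hμ hadj (fun x y hxy => by rw [hh x y hxy]) hρ']

theorem IsGibbs.ent_condMean_le (hμ : ∀ σ, 0 ≤ μ σ) (hG : IsGibbs G μ) {T Y : Finset V}
    (hTY : Disjoint T Y) (hadj : ∀ a ∈ T, ∀ b ∈ Y, ¬G.Adj a b) {u : Conf V q → ℝ}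
    (hu : ∀ σ, 0 ≤ u σ) {ρ : Conf V q} (hρ : 0 < μ ρ) :
    ent (condDist μ Yᶜ ρ) (condMean μ T u) ≤
      condMean μ T (fun ζ => ent (condDist μ Yᶜ ζ) u) ρ := by
  have hfT : Factorizes μ T (T ∪ Y)ᶜ := hG.factorizes_of_not_adj hadj
  have hfY : Factorizes μ Y (T ∪ Y)ᶜ := by
    rw [union_comm]
    exact hG.factorizes_of_not_adj fun a ha b hb h => hadj b hb a ha h.symm
  -- `σ = ρ` off `Y`, so the law of the spins on `T` given `σ` is the one given `ρ`
  have hmix : ∀ σ, condDist μ Yᶜ ρ σ ≠ 0 →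
      condMean μ T u σ = ∑ ζ, condDist μ Tᶜ ρ ζ * u (T.piecewise ζ σ) := by
    intro σ hσ
    obtain ⟨hσρ, hσ⟩ := condDist_ne_zero hμ hσ
    exact (hfT.mean_condDist_piecewise (fun v hv => (hσρ v (by simp_all)).symm)
      (agreeProb_pos hμ _ hρ).ne' (agreeProb_pos hμ _ hσ).ne' u).symm
  -- `ζ = ρ` off `T`, so the law of the spins on `Y` given `ζ` is the one given `ρ`
  have htransport : ∀ ζ, condDist μ Tᶜ ρ ζ ≠ 0 →
      ent (condDist μ Yᶜ ρ) (fun σ => u (T.piecewise ζ σ)) = ent (condDist μ Yᶜ ζ) u := by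
    intro ζ hζ
    obtain ⟨hζρ, hζ⟩ := condDist_ne_zero hμ hζ
    rw [← hfY.ent_condDist_piecewise (fun v hv => (hζρ v (by simp_all)).symm)
      (agreeProb_pos hμ _ hρ).ne' (agreeProb_pos hμ _ hζ).ne' u]
    refine ent_congr fun σ hσ => congrArg u (funext fun v => ?_)
    obtain ⟨hσρ, -⟩ := condDist_ne_zero hμ hσ
    by_cases hvT : v ∈ T
    · simp [hvT, disjoint_left.1 hTY hvT]
    · by_cases hvY : v ∈ Y
      · simp [hvT, hvY]
      · simp [hvT, hvY, hσρ v (mem_compl.2 hvY), hζρ v (mem_compl.2 hvT)]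
  calc ent (condDist μ Yᶜ ρ) (condMean μ T u)
      = ent (condDist μ Yᶜ ρ) (fun σ => ∑ ζ, condDist μ Tᶜ ρ ζ * u (T.piecewise ζ σ)) :=
        ent_congr hmix
    _ ≤ ∑ ζ, condDist μ Tᶜ ρ ζ * ent (condDist μ Yᶜ ρ) (fun σ => u (T.piecewise ζ σ)) :=
        ent_sum_le (condDist_nonneg hμ _ ρ) univ (fun ζ _ => condDist_nonneg hμ _ ρ ζ)
          fun ζ _ σ => hu _
    _ = condMean μ T (fun ζ => ent (condDist μ Yᶜ ζ) u) ρ := by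
        refine sum_congr rfl fun ζ _ => ?_
        by_cases hζ : condDist μ Tᶜ ρ ζ = 0
        · simp [hζ]
        · rw [htransport ζ hζ]

theorem IsGibbs.blockEnt_condMean_le (hμ : ∀ σ, 0 ≤ μ σ) (hG : IsGibbs G μ)
    {T Y : Finset V} (hTY : Disjoint T Y) (hadj : ∀ a ∈ T, ∀ b ∈ Y, ¬G.Adj a b)
    {u : Conf V q → ℝ} (hu : ∀ σ, 0 ≤ u σ) :
    blockEnt μ Y (condMean μ T u) ≤ blockEnt μ Y u :=
  (mean_le_mean hμ fun ρ hρ => hG.ent_condMean_le hμ hTY hadj hu ((hμ ρ).lt_of_ne' hρ)).trans_eq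
    (mean_condMean hμ T _)

theorem IsGibbs.blockEnt_add_blockEnt_condMean_le (hμ : ∀ σ, 0 ≤ μ σ) (hG : IsGibbs G μ)
    {T X Y : Finset V} (hXT : X ⊆ T) (hTY : Disjoint T Y)
    (hadj : ∀ a ∈ T, ∀ b ∈ Y, ¬G.Adj a b) {g : Conf V q → ℝ} (hg : ∀ σ, 0 ≤ g σ) :
    blockEnt μ X g + blockEnt μ Y (condMean μ T g) ≤ blockEnt μ (X ∪ Y) g :=
  calc blockEnt μ X g + blockEnt μ Y (condMean μ T g)
      = blockEnt μ X g + blockEnt μ Y (condMean μ T (condMean μ X g)) := by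
        rw [condMean_condMean hμ hXT]
    _ ≤ blockEnt μ X g + blockEnt μ Y (condMean μ X g) :=
        add_le_add le_rfl (hG.blockEnt_condMean_le hμ hTY hadj (condMean_nonneg hμ X hg))
    _ ≤ blockEnt μ X g + blockEnt μ (X ∪ Y) (condMean μ X g) :=
        add_le_add le_rfl (blockEnt_mono hμ subset_union_right (condMean_nonneg hμ X hg))
    _ = blockEnt μ (X ∪ Y) g := (blockEnt_chain hμ subset_union_left g).symm

theorem IsGibbs.blockFactorizes_union (hμ : ∀ σ, 0 ≤ μ σ) (hG : IsGibbs G μ) (hc : 0 ≤ c)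
    {T R : Finset V} (hTR : Disjoint T R) (hadj : ∀ a ∈ T, ∀ b ∈ R, ¬G.Adj a b)
    (hT : BlockFactorizes μ U c T) (hR : BlockFactorizes μ U c R) :
    BlockFactorizes μ U c (T ∪ R) := by
  intro g hg
  have hsplit : ∀ i, blockEnt μ (T ∩ U i) g + blockEnt μ (R ∩ U i) (condMean μ T g) ≤
      blockEnt μ ((T ∪ R) ∩ U i) g := fun i => by
    rw [union_inter_distrib_right]
    exact hG.blockEnt_add_blockEnt_condMean_le hμ inter_subset_left
      (hTR.mono_right inter_subset_left) (fun a ha b hb => hadj a ha b (mem_inter.1 hb).1) hg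
  calc blockEnt μ (T ∪ R) g
      = blockEnt μ T g + blockEnt μ R (condMean μ T g) := by
        rw [blockEnt_chain hμ subset_union_left,
          hG.blockEnt_union_eq hμ hadj fun x y => condMean_congr T g]
    _ ≤ c * ∑ i, blockEnt μ (T ∩ U i) g + c * ∑ i, blockEnt μ (R ∩ U i) (condMean μ T g) :=
        add_le_add (hT g hg) (hR _ (condMean_nonneg hμ T hg))
    _ = c * ∑ i, (blockEnt μ (T ∩ U i) g + blockEnt μ (R ∩ U i) (condMean μ T g)) := by
        rw [sum_add_distrib, mul_add]
    _ ≤ c * ∑ i, blockEnt μ ((T ∪ R) ∩ U i) g :=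
        mul_le_mul_of_nonneg_left (sum_le_sum fun i _ => hsplit i) hc

theorem IsGibbs.blockFactorizes_of_closed (hμ : ∀ σ, 0 ≤ μ σ) (hG : IsGibbs G μ) (hc : 0 ≤ c)
    {S : Finset V} (hcomp : ∀ T, IsComponent G S T → BlockFactorizes μ U c T) :
    ∀ S' ⊆ S, (∀ a ∈ S', ∀ b ∈ S, G.Adj a b → b ∈ S') → BlockFactorizes μ U c S' := by
  intro S'
  induction S' using Finset.strongInduction with
  | H S' ih =>
  intro hS' hcl
  rcases S'.eq_empty_or_nonempty with rfl | ⟨u, hu⟩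
  · exact blockFactorizes_empty hμ
  set T := componentOf G S u
  have huT : u ∈ T := mem_componentOf_self (hS' hu)
  have hTS' : T ⊆ S' := componentOf_subset_of_closed hcl hu
  have hadj : ∀ a ∈ T, ∀ b ∈ S' \ T, ¬G.Adj a b := fun a ha b hb hab =>
    (mem_sdiff.1 hb).2 (componentOf_closed ha (hS' (mem_sdiff.1 hb).1) hab)
  have hRcl : ∀ a ∈ S' \ T, ∀ b ∈ S, G.Adj a b → b ∈ S' \ T := fun a ha b hb hab =>
    mem_sdiff.2 ⟨hcl a (mem_sdiff.1 ha).1 b hb hab,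
      fun hbT => (mem_sdiff.1 ha).2 (componentOf_closed hbT (hS' (mem_sdiff.1 ha).1) hab.symm)⟩
  rw [← union_sdiff_of_subset hTS']
  exact hG.blockFactorizes_union hμ hc disjoint_sdiff hadj
    (hcomp T (isComponent_componentOf (hS' hu)))
    (ih _ (sdiff_ssubset hTS' ⟨u, huT⟩) (sdiff_subset.trans hS') hRcl)

end Gibbs

end SpinGraph

theorem component_factorization_general (n Q : ℕ) (G : SimpleGraph (Fin n))
    (μ : Conf (Fin n) Q → ℝ) (hdist : IsDist μ) (hgibbs : IsGibbs G μ)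
    (k : ℕ) (Vj : Fin k → Finset (Fin n))
    (S : Finset (Fin n)) (Γ : Finset (Fin n) → ℝ)
    (hΓ : ∀ T, IsComponent G S T →
      ∀ τ : Conf (Fin n) Q, 0 < agreeProb μ Tᶜ τ →
        ∀ g : Conf (Fin n) Q → ℝ, (∀ σ, 0 ≤ g σ) →
          ent (condDist μ Tᶜ τ) g ≤
            Γ T * ∑ i, ∑ ρ : Conf (Fin n) Q,
              condDist μ Tᶜ τ ρ * ent (condDist μ (T ∩ Vj i)ᶜ ρ) g) :
    ∀ M : ℝ, 0 ≤ M → (∀ T, IsComponent G S T → Γ T ≤ M) →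
      ∀ f : Conf (Fin n) Q → ℝ, (∀ σ, 0 ≤ f σ) →
        blockEnt μ S f ≤ M * ∑ i, blockEnt μ (Vj i) f := by
  intro M hM hΓM f hf
  have hμ := hdist.1
  have hcomp : ∀ T, IsComponent G S T → BlockFactorizes μ Vj M T := fun T hT g hg =>
    (blockEnt_le_of_ent_le hμ fun τ hτ => hΓ T hT τ (agreeProb_pos hμ _ hτ) g hg).trans
      (mul_le_mul_of_nonneg_right (hΓM T hT) (sum_nonneg fun i _ => blockEnt_nonneg hμ _ hg))
  calc blockEnt μ S f
      ≤ M * ∑ i, blockEnt μ (S ∩ Vj i) f :=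
        hgibbs.blockFactorizes_of_closed hμ hM hcomp S subset_rfl (fun _ _ b hb _ => hb) f hf
    _ ≤ M * ∑ i, blockEnt μ (Vj i) f := by
        gcongr with i
        exact blockEnt_mono hμ inter_subset_right hf

/-- Entropy factorization through the connected components of `S`:
if on each component `S_i` entropy factorizes into the independent sets with constant
`Γ(S_i)`, then `E_{τ∼μ_{V∖S}}[Ent^τ_S(f^τ)] ≤ (max_i Γ(S_i)) Σ_j E_{τ∼μ_{V∖V_j}}[Ent^τ_{V_j}(f^τ)]`. -/
theorem component_factorization (n Q : ℕ) (G : SimpleGraph (Fin n))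
    (μ : Conf (Fin n) Q → ℝ) (hdist : IsDist μ) (hgibbs : IsGibbs G μ)
    (k : ℕ) (Vj : Fin k → Finset (Fin n))
    (hind : ∀ i, IndepSet G (Vj i))
    (hdisj : ∀ i j, i ≠ j → Disjoint (Vj i) (Vj j))
    (hcover : ∀ v, ∃ i, v ∈ Vj i)
    (S : Finset (Fin n)) (Γ : Finset (Fin n) → ℝ)
    (hΓ : ∀ T, IsComponent G S T →
      ∀ τ : Conf (Fin n) Q, 0 < agreeProb μ Tᶜ τ →
        ∀ g : Conf (Fin n) Q → ℝ, (∀ σ, 0 ≤ g σ) →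
          ent (condDist μ Tᶜ τ) g ≤
            Γ T * ∑ i, ∑ ρ : Conf (Fin n) Q,
              condDist μ Tᶜ τ ρ * ent (condDist μ (T ∩ Vj i)ᶜ ρ) g) :
    ∀ M : ℝ, 0 ≤ M → (∀ T, IsComponent G S T → Γ T ≤ M) →
      ∀ f : Conf (Fin n) Q → ℝ, (∀ σ, 0 ≤ f σ) →
        blockEnt μ S f ≤ M * ∑ i, blockEnt μ (Vj i) f :=
  component_factorization_general n Q G μ hdist hgibbs k Vj S Γ hΓ
end
end

section
/- Let μ be a totally-connected, b-marginally bounded distribution over [q]^V with |V| = n. Then for every 0 ≤ k ≤ n−2, every Λ ⊆ V with |Λ| = k, and every pinning τ on Λ, the largest eigenvalue of the signed pairwise influence matrix satisfies λ_1(Ψ^τ_μ) ≤ (n−k−1) · ( 1 − 2b^4/(n−k)^4 ). -/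
open Finset

attribute [local instance] Classical.propDecidable

noncomputable section

open SpinGraph Finset

namespace CrudeSI

variable {V : Type*} [Fintype V] [DecidableEq V] {q : ℕ}
variable (μ : Conf V q → ℝ) (Λ : Finset V) (τ : Conf V q)

def w (p : V × Fin q) : ℝ := condProb μ Λ τ (fun σ => σ p.1 = p.2)

def Jf (p r : V × Fin q) : ℝ := condProb μ Λ τ (fun σ => σ p.1 = p.2 ∧ σ r.1 = r.2)

def PF : Finset (V × Fin q) := univ.filter (fun p => p.1 ∉ Λ ∧ 0 < w μ Λ τ p)

def Kf (p r : V × Fin q) : ℝ :=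
  if p.1 = r.1 then 0 else Jf μ Λ τ p r - w μ Λ τ p * w μ Λ τ r

variable {μ Λ τ}

lemma mem_PF {p : V × Fin q} : p ∈ PF μ Λ τ ↔ p.1 ∉ Λ ∧ 0 < w μ Λ τ p := by
  simp [PF]

lemma condProb_nonneg (hd : IsDist μ) (E : Conf V q → Prop) : 0 ≤ condProb μ Λ τ E := by
  unfold condProb agreeProb
  exact div_nonneg (Finset.sum_nonneg fun σ _ => hd.1 σ) (Finset.sum_nonneg fun σ _ => hd.1 σ)

lemma condProb_mono (hd : IsDist μ) (hA : 0 < agreeProb μ Λ τ) {E E' : Conf V q → Prop}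
    (h : ∀ σ, E σ → E' σ) : condProb μ Λ τ E ≤ condProb μ Λ τ E' := by
  unfold condProb
  refine (div_le_div_iff_of_pos_right hA).mpr ?_
  refine Finset.sum_le_sum_of_subset_of_nonneg ?_ (fun σ _ _ => hd.1 σ)
  intro σ hσ
  rw [Finset.mem_filter] at hσ ⊢
  exact ⟨hσ.1, h σ hσ.2.1, hσ.2.2⟩

lemma condProb_congr {E E' : Conf V q → Prop} (h : ∀ σ, E σ ↔ E' σ) :
    condProb μ Λ τ E = condProb μ Λ τ E' := by
  unfold condProb
  congr 1
  apply Finset.sum_congr ?_ (fun _ _ => rfl)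
  ext σ
  simp only [Finset.mem_filter, Finset.mem_univ, true_and]
  rw [h σ]

lemma condProb_true (hA : 0 < agreeProb μ Λ τ) :
    condProb μ Λ τ (fun _ => True) = 1 := by
  unfold condProb
  rw [div_eq_one_iff_eq hA.ne']
  unfold agreeProb
  apply Finset.sum_congr ?_ (fun _ _ => rfl)
  ext σ
  simp only [Finset.mem_filter, Finset.mem_univ, true_and, true_and]

lemma condProb_partition (E : Conf V q → Prop) (u : V) :
    ∑ a : Fin q, condProb μ Λ τ (fun σ => E σ ∧ σ u = a) = condProb μ Λ τ E := by
  unfold condProb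
  rw [← Finset.sum_div]
  congr 1
  rw [← Finset.sum_fiberwise_of_maps_to (g := fun σ : Conf V q => σ u)
    (t := (univ : Finset (Fin q))) (fun i _ => Finset.mem_univ _)]
  apply Finset.sum_congr rfl
  intro a _
  apply Finset.sum_congr ?_ (fun _ _ => rfl)
  ext σ
  simp only [Finset.mem_filter, Finset.mem_univ, true_and]
  tauto

lemma sum_w_eq_one (hA : 0 < agreeProb μ Λ τ) (u : V) :
    ∑ a : Fin q, w μ Λ τ (u, a) = 1 := by
  have h := condProb_partition (μ := μ) (Λ := Λ) (τ := τ) (fun _ => True) u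
  rw [condProb_true hA] at h
  rw [← h]
  apply Finset.sum_congr rfl
  intro a _
  exact condProb_congr fun σ => by simp

lemma sum_Jf (p : V × Fin q) (v : V) :
    ∑ b : Fin q, Jf μ Λ τ p (v, b) = w μ Λ τ p :=
  condProb_partition (fun σ => σ p.1 = p.2) v

lemma Jf_symm (p r : V × Fin q) : Jf μ Λ τ p r = Jf μ Λ τ r p :=
  condProb_congr fun σ => and_comm

lemma Jf_le_w_left (hd : IsDist μ) (hA : 0 < agreeProb μ Λ τ) (p r : V × Fin q) :
    Jf μ Λ τ p r ≤ w μ Λ τ p :=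
  condProb_mono hd hA fun σ h => h.1

lemma Jf_le_w_right (hd : IsDist μ) (hA : 0 < agreeProb μ Λ τ) (p r : V × Fin q) :
    Jf μ Λ τ p r ≤ w μ Λ τ r :=
  condProb_mono hd hA fun σ h => h.2

lemma w_le_one (hd : IsDist μ) (hA : 0 < agreeProb μ Λ τ) (p : V × Fin q) :
    w μ Λ τ p ≤ 1 := by
  have := condProb_mono hd hA (E := fun σ => σ p.1 = p.2) (E' := fun _ => True)
    (fun _ _ => trivial)
  rwa [condProb_true hA] at this

end CrudeSI

namespace CrudeSI

variable {V : Type*} [Fintype V] [DecidableEq V] {q : ℕ}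
variable {μ : Conf V q → ℝ} {Λ : Finset V} {τ : Conf V q}

lemma agr_insert_iff {u : V} (hu : u ∉ Λ) (a : Fin q) (σ : Conf V q) :
    (∀ v ∈ insert u Λ, σ v = Function.update τ u a v) ↔
      (σ u = a ∧ ∀ v ∈ Λ, σ v = τ v) := by
  rw [Finset.forall_mem_insert]
  constructor
  · rintro ⟨h1, h2⟩
    rw [Function.update_self] at h1
    refine ⟨h1, fun v hv => ?_⟩
    have := h2 v hv
    rwa [Function.update_of_ne (ne_of_mem_of_not_mem hv hu)] at this
  · rintro ⟨h1, h2⟩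
    refine ⟨by rw [Function.update_self]; exact h1, fun v hv => ?_⟩
    rw [Function.update_of_ne (ne_of_mem_of_not_mem hv hu)]
    exact h2 v hv

lemma agree_insert (hA : 0 < agreeProb μ Λ τ) {p : V × Fin q} (hu : p.1 ∉ Λ) :
    agreeProb μ (insert p.1 Λ) (Function.update τ p.1 p.2) =
      w μ Λ τ p * agreeProb μ Λ τ := by
  unfold w condProb
  rw [div_mul_cancel₀ _ hA.ne']
  unfold agreeProb
  apply Finset.sum_congr ?_ (fun _ _ => rfl)
  ext σ
  simp only [Finset.mem_filter, Finset.mem_univ, true_and]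
  rw [agr_insert_iff hu p.2 σ]

lemma condProb_insert (hA : 0 < agreeProb μ Λ τ) {p : V × Fin q} (hu : p.1 ∉ Λ)
    (hw : 0 < w μ Λ τ p) (E : Conf V q → Prop) :
    condProb μ (insert p.1 Λ) (Function.update τ p.1 p.2) E =
      condProb μ Λ τ (fun σ => E σ ∧ σ p.1 = p.2) / w μ Λ τ p := by
  conv_lhs => rw [condProb, agree_insert hA hu]
  rw [condProb, div_div, mul_comm (w μ Λ τ p) (agreeProb μ Λ τ), ← div_div, ← div_div]
  congr 2
  apply Finset.sum_congr ?_ (fun _ _ => rfl)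
  ext σ
  simp only [Finset.mem_filter, Finset.mem_univ, true_and]
  rw [agr_insert_iff hu p.2 σ]
  tauto

lemma w_mul_condProb_insert (hA : 0 < agreeProb μ Λ τ) {p : V × Fin q} (hu : p.1 ∉ Λ)
    (hw : 0 < w μ Λ τ p) (E : Conf V q → Prop) :
    w μ Λ τ p * condProb μ (insert p.1 Λ) (Function.update τ p.1 p.2) E =
      condProb μ Λ τ (fun σ => E σ ∧ σ p.1 = p.2) := by
  rw [condProb_insert hA hu hw E, mul_div_cancel₀ _ hw.ne']

lemma w_mul_Jf (hA : 0 < agreeProb μ Λ τ) {p : V × Fin q} (hu : p.1 ∉ Λ)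
    (hw : 0 < w μ Λ τ p) (r : V × Fin q) :
    w μ Λ τ p * condProb μ (insert p.1 Λ) (Function.update τ p.1 p.2)
      (fun σ => σ r.1 = r.2) = Jf μ Λ τ p r := by
  rw [w_mul_condProb_insert hA hu hw]
  unfold Jf
  exact condProb_congr fun σ => and_comm

lemma w_mul_influence (hA : 0 < agreeProb μ Λ τ) (p r : Pairs μ Λ τ) :
    w μ Λ τ p.1 * influence μ Λ τ p r = Kf μ Λ τ p.1 r.1 := by
  have hp : p.1.1 ∉ Λ ∧ 0 < w μ Λ τ p.1 := p.2
  unfold influence Kf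
  by_cases h : p.1.1 = r.1.1
  · rw [if_pos h, if_pos h, mul_zero]
  · rw [if_neg h, if_neg h, mul_sub]
    congr 1
    exact w_mul_Jf hA hp.1 hp.2 r.1

lemma b_le_w {b : ℝ} (hm : MargBounded b μ) (hA : 0 < agreeProb μ Λ τ)
    {p : V × Fin q} (hp : p ∈ PF μ Λ τ) : b ≤ w μ Λ τ p := by
  rw [mem_PF] at hp
  exact hm Λ τ hA p.1 hp.1 p.2 hp.2

lemma b_sq_le_Jf {b : ℝ} (hb : 0 ≤ b) (hd : IsDist μ) (hm : MargBounded b μ)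
    (hA : 0 < agreeProb μ Λ τ)
    {p r : V × Fin q} (hp : p ∈ PF μ Λ τ) (hr : r.1 ∉ Λ) (hne : p.1 ≠ r.1)
    (hJ : 0 < Jf μ Λ τ p r) : b * b ≤ Jf μ Λ τ p r := by
  rw [mem_PF] at hp
  have hb1 : b ≤ w μ Λ τ p := hm Λ τ hA p.1 hp.1 p.2 hp.2
  have key := w_mul_Jf hA hp.1 hp.2 r
  have hA' : 0 < agreeProb μ (insert p.1 Λ) (Function.update τ p.1 p.2) := by
    rw [agree_insert hA hp.1]
    exact mul_pos hp.2 hA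
  set c := condProb μ (insert p.1 Λ) (Function.update τ p.1 p.2)
      (fun σ => σ r.1 = r.2) with hc
  have hcpos : 0 < c := by
    rcases lt_or_ge 0 c with h | h
    · exact h
    · exfalso
      have : Jf μ Λ τ p r ≤ 0 := by
        rw [← key]
        exact mul_nonpos_of_nonneg_of_nonpos (le_of_lt hp.2) h
      linarith
  have hb2 : b ≤ c := by
    refine hm (insert p.1 Λ) (Function.update τ p.1 p.2) hA' r.1 ?_ r.2 hcpos
    simp only [Finset.mem_insert, not_or]
    exact ⟨Ne.symm hne, hr⟩
  calc b * b ≤ w μ Λ τ p * c := mul_le_mul hb1 hb2 hb (le_trans hb hb1)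
  _ = Jf μ Λ τ p r := key

end CrudeSI

namespace CrudeSI

variable {V : Type*} [Fintype V] [DecidableEq V] {q : ℕ}
variable {μ : Conf V q → ℝ} {Λ : Finset V} {τ : Conf V q}

lemma w_nonneg (hd : IsDist μ) (p : V × Fin q) : 0 ≤ w μ Λ τ p :=
  condProb_nonneg hd _

lemma Jf_nonneg (hd : IsDist μ) (p r : V × Fin q) : 0 ≤ Jf μ Λ τ p r :=
  condProb_nonneg hd _

lemma w_eq_zero_of_not_mem (hd : IsDist μ) {p : V × Fin q} (hp : p.1 ∉ Λ)
    (h : p ∉ PF μ Λ τ) : w μ Λ τ p = 0 := by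
  rw [mem_PF] at h
  push_neg at h
  exact le_antisymm (h hp) (w_nonneg hd p)

lemma sum_fiber_extend (hd : IsDist μ) {v : V} (hv : v ∉ Λ) (f : V × Fin q → ℝ)
    (hf0 : ∀ p, p.1 ∉ Λ → w μ Λ τ p = 0 → f p = 0) :
    ∑ p ∈ (PF μ Λ τ).filter (fun p => p.1 = v), f p = ∑ a : Fin q, f (v, a) := by
  rw [show (∑ a : Fin q, f (v, a)) = ∑ p ∈ ({v} : Finset V) ×ˢ (univ : Finset (Fin q)), f p by
    rw [Finset.sum_product, Finset.sum_singleton]]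
  apply Finset.sum_subset
  · intro p hp
    rw [Finset.mem_filter] at hp
    rw [Finset.mem_product, Finset.mem_singleton]
    exact ⟨hp.2, Finset.mem_univ _⟩
  · intro p hp hnp
    rw [Finset.mem_product, Finset.mem_singleton] at hp
    have h1 : p.1 ∉ Λ := hp.1 ▸ hv
    have : p ∉ PF μ Λ τ := by
      intro hmem
      exact hnp (Finset.mem_filter.mpr ⟨hmem, hp.1⟩)
    exact hf0 p h1 (w_eq_zero_of_not_mem hd h1 this)

lemma sum_fiber_w (hd : IsDist μ) (hA : 0 < agreeProb μ Λ τ) {v : V} (hv : v ∉ Λ) :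
    ∑ p ∈ (PF μ Λ τ).filter (fun p => p.1 = v), w μ Λ τ p = 1 := by
  rw [sum_fiber_extend hd hv _ (fun p _ h => h)]
  exact sum_w_eq_one hA v

lemma sum_fiber_Jf (hd : IsDist μ) (hA : 0 < agreeProb μ Λ τ) (p : V × Fin q)
    {v : V} (hv : v ∉ Λ) :
    ∑ r ∈ (PF μ Λ τ).filter (fun r => r.1 = v), Jf μ Λ τ p r = w μ Λ τ p := by
  rw [sum_fiber_extend hd hv _ (fun r _ h => le_antisymm (h ▸ Jf_le_w_right hd hA p r)
    (Jf_nonneg hd p r))]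
  exact sum_Jf p v

lemma sum_PF_fiberwise (f : V × Fin q → ℝ) :
    ∑ v ∈ Λᶜ, ∑ p ∈ (PF μ Λ τ).filter (fun p => p.1 = v), f p = ∑ p ∈ PF μ Λ τ, f p := by
  apply Finset.sum_fiberwise_of_maps_to
  intro p hp
  rw [Finset.mem_compl]
  exact (mem_PF.mp hp).1

lemma sum_w_PF (hd : IsDist μ) (hA : 0 < agreeProb μ Λ τ) :
    ∑ p ∈ PF μ Λ τ, w μ Λ τ p = (Λᶜ.card : ℝ) := by
  rw [← sum_PF_fiberwise]
  rw [Finset.sum_congr rfl (fun v hv => sum_fiber_w hd hA (Finset.mem_compl.mp hv))]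
  simp

lemma b_card_PF {b : ℝ} (hd : IsDist μ) (hm : MargBounded b μ)
    (hA : 0 < agreeProb μ Λ τ) :
    b * (PF μ Λ τ).card ≤ (Λᶜ.card : ℝ) := by
  rw [← sum_w_PF hd hA, mul_comm]
  calc ((PF μ Λ τ).card : ℝ) * b = ∑ _p ∈ PF μ Λ τ, b := by rw [Finset.sum_const, nsmul_eq_mul]
  _ ≤ ∑ p ∈ PF μ Λ τ, w μ Λ τ p := Finset.sum_le_sum (fun p hp => b_le_w hm hA hp)

lemma Kf_symm (p r : V × Fin q) : Kf μ Λ τ p r = Kf μ Λ τ r p := by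
  unfold Kf
  by_cases h : p.1 = r.1
  · rw [if_pos h, if_pos h.symm]
  · rw [if_neg h, if_neg (Ne.symm h), Jf_symm, mul_comm]

lemma sum_fiber_Kf (hd : IsDist μ) (hA : 0 < agreeProb μ Λ τ) {p : V × Fin q}
    (hp : p ∈ PF μ Λ τ) {v : V} (hv : v ∉ Λ) :
    ∑ r ∈ (PF μ Λ τ).filter (fun r => r.1 = v), Kf μ Λ τ p r = 0 := by
  by_cases hpv : p.1 = v
  · apply Finset.sum_eq_zero
    intro r hr
    rw [Finset.mem_filter] at hr
    unfold Kf
    rw [if_pos (hpv.trans hr.2.symm)]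
  · have : ∀ r ∈ (PF μ Λ τ).filter (fun r => r.1 = v),
        Kf μ Λ τ p r = Jf μ Λ τ p r - w μ Λ τ p * w μ Λ τ r := by
      intro r hr
      rw [Finset.mem_filter] at hr
      unfold Kf
      rw [if_neg (hr.2 ▸ hpv)]
    rw [Finset.sum_congr rfl this, Finset.sum_sub_distrib, sum_fiber_Jf hd hA p hv,
      ← Finset.mul_sum, sum_fiber_w hd hA hv, mul_one, sub_self]

lemma sum_pairs (f : V × Fin q → ℝ) :
    ∑ p : Pairs μ Λ τ, f p.1 = ∑ p ∈ PF μ Λ τ, f p :=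
  (Finset.sum_subtype (PF μ Λ τ) (fun _ => mem_PF) f).symm

end CrudeSI

namespace CrudeSI

variable {V : Type*} [Fintype V] [DecidableEq V] {q : ℕ}

section Defs
variable (μ : Conf V q → ℝ) (Λ : Finset V) (τ : Conf V q)

def Xe (x : Pairs μ Λ τ → ℝ) : V × Fin q → ℝ :=
  fun p => if h : p ∈ PF μ Λ τ then x ⟨p, mem_PF.mp h⟩ else 0

def cv (x : Pairs μ Λ τ → ℝ) : V → ℝ :=
  fun v => ∑ r ∈ (PF μ Λ τ).filter (fun r => r.1 = v), w μ Λ τ r * Xe μ Λ τ x r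

def Ye (x : Pairs μ Λ τ → ℝ) : V × Fin q → ℝ :=
  fun p => Xe μ Λ τ x p - cv μ Λ τ x p.1

end Defs

variable {μ : Conf V q → ℝ} {Λ : Finset V} {τ : Conf V q}

lemma Xe_coe (x : Pairs μ Λ τ → ℝ) (r : Pairs μ Λ τ) : Xe μ Λ τ x r.1 = x r := by
  unfold Xe
  rw [dif_pos (mem_PF.mpr r.2)]
  exact congrArg x (Subtype.ext rfl)

/-- the fiber sums of `w * Ye` vanish -/
lemma sum_fiber_wY (hd : IsDist μ) (hA : 0 < agreeProb μ Λ τ) (x : Pairs μ Λ τ → ℝ)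
    {v : V} (hv : v ∉ Λ) :
    ∑ r ∈ (PF μ Λ τ).filter (fun r => r.1 = v), w μ Λ τ r * Ye μ Λ τ x r = 0 := by
  have : ∀ r ∈ (PF μ Λ τ).filter (fun r => r.1 = v),
      w μ Λ τ r * Ye μ Λ τ x r = w μ Λ τ r * Xe μ Λ τ x r - w μ Λ τ r * cv μ Λ τ x v := by
    intro r hr
    rw [Finset.mem_filter] at hr
    unfold Ye
    rw [hr.2, mul_sub]
  rw [Finset.sum_congr rfl this, Finset.sum_sub_distrib, ← Finset.sum_mul,
    sum_fiber_w hd hA hv, one_mul]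
  exact sub_self _

lemma sum_wY (hd : IsDist μ) (hA : 0 < agreeProb μ Λ τ) (x : Pairs μ Λ τ → ℝ) :
    ∑ r ∈ PF μ Λ τ, w μ Λ τ r * Ye μ Λ τ x r = 0 := by
  rw [← sum_PF_fiberwise]
  apply Finset.sum_eq_zero
  intro v hv
  exact sum_fiber_wY hd hA x (Finset.mem_compl.mp hv)

lemma sum_wY_ne (hd : IsDist μ) (hA : 0 < agreeProb μ Λ τ) (x : Pairs μ Λ τ → ℝ)
    {u : V} (hu : u ∉ Λ) :
    ∑ r ∈ (PF μ Λ τ).filter (fun r => ¬ r.1 = u), w μ Λ τ r * Ye μ Λ τ x r = 0 := by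
  have hsplit := Finset.sum_filter_add_sum_filter_not (PF μ Λ τ) (fun r => r.1 = u)
    (fun r => w μ Λ τ r * Ye μ Λ τ x r)
  rw [sum_fiber_wY hd hA x hu, zero_add] at hsplit
  rw [hsplit]
  exact sum_wY hd hA x

/-- replacing `Xe` by `Ye` in the second slot of the form -/
lemma form_snd (hd : IsDist μ) (hA : 0 < agreeProb μ Λ τ) (x : Pairs μ Λ τ → ℝ)
    (g : V × Fin q → ℝ) :
    ∑ p ∈ PF μ Λ τ, ∑ r ∈ PF μ Λ τ, Kf μ Λ τ p r * g p * Xe μ Λ τ x r =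
    ∑ p ∈ PF μ Λ τ, ∑ r ∈ PF μ Λ τ, Kf μ Λ τ p r * g p * Ye μ Λ τ x r := by
  rw [← sub_eq_zero, ← Finset.sum_sub_distrib]
  apply Finset.sum_eq_zero
  intro p hp
  rw [← Finset.sum_sub_distrib]
  have : ∀ r ∈ PF μ Λ τ,
      Kf μ Λ τ p r * g p * Xe μ Λ τ x r - Kf μ Λ τ p r * g p * Ye μ Λ τ x r =
      Kf μ Λ τ p r * (g p * cv μ Λ τ x r.1) := by
    intro r _
    unfold Ye
    ring
  rw [Finset.sum_congr rfl this, ← sum_PF_fiberwise]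
  apply Finset.sum_eq_zero
  intro v hv
  have : ∀ r ∈ (PF μ Λ τ).filter (fun r => r.1 = v),
      Kf μ Λ τ p r * (g p * cv μ Λ τ x r.1) = (g p * cv μ Λ τ x v) * Kf μ Λ τ p r := by
    intro r hr
    rw [Finset.mem_filter] at hr
    rw [hr.2]
    ring
  rw [Finset.sum_congr rfl this, ← Finset.mul_sum,
    sum_fiber_Kf hd hA hp (Finset.mem_compl.mp hv), mul_zero]

/-- replacing `Xe` by `Ye` in the first slot of the form -/
lemma form_fst (hd : IsDist μ) (hA : 0 < agreeProb μ Λ τ) (x : Pairs μ Λ τ → ℝ)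
    (g : V × Fin q → ℝ) :
    ∑ p ∈ PF μ Λ τ, ∑ r ∈ PF μ Λ τ, Kf μ Λ τ p r * Xe μ Λ τ x p * g r =
    ∑ p ∈ PF μ Λ τ, ∑ r ∈ PF μ Λ τ, Kf μ Λ τ p r * Ye μ Λ τ x p * g r := by
  rw [Finset.sum_comm]
  conv_rhs => rw [Finset.sum_comm]
  have l : ∀ r ∈ PF μ Λ τ, ∀ p ∈ PF μ Λ τ, Kf μ Λ τ p r * Xe μ Λ τ x p * g r
      = Kf μ Λ τ r p * g r * Xe μ Λ τ x p := by
    intro r _ p _; rw [Kf_symm]; ring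
  have l' : ∀ r ∈ PF μ Λ τ, ∀ p ∈ PF μ Λ τ, Kf μ Λ τ p r * Ye μ Λ τ x p * g r
      = Kf μ Λ τ r p * g r * Ye μ Λ τ x p := by
    intro r _ p _; rw [Kf_symm]; ring
  rw [Finset.sum_congr rfl (fun r hr => Finset.sum_congr rfl (l r hr)),
    Finset.sum_congr rfl (fun r hr => Finset.sum_congr rfl (l' r hr))]
  exact form_snd hd hA x g

/-- the form with `Kf` equals the form with the pure `Jf` part on centered vectors -/
lemma form_J (hd : IsDist μ) (hA : 0 < agreeProb μ Λ τ) (x : Pairs μ Λ τ → ℝ) :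
    ∑ p ∈ PF μ Λ τ, ∑ r ∈ PF μ Λ τ, Kf μ Λ τ p r * Ye μ Λ τ x p * Ye μ Λ τ x r =
    ∑ p ∈ PF μ Λ τ, ∑ r ∈ PF μ Λ τ,
      (if p.1 = r.1 then 0 else Jf μ Λ τ p r * Ye μ Λ τ x p * Ye μ Λ τ x r) := by
  rw [← sub_eq_zero, ← Finset.sum_sub_distrib]
  apply Finset.sum_eq_zero
  intro p hp
  rw [← Finset.sum_sub_distrib]
  have hz : ∑ r ∈ PF μ Λ τ, (if ¬ r.1 = p.1 then w μ Λ τ r * Ye μ Λ τ x r else 0) = 0 := by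
    rw [← Finset.sum_filter]
    exact sum_wY_ne hd hA x (mem_PF.mp hp).1
  have hc : ∀ r ∈ PF μ Λ τ,
      Kf μ Λ τ p r * Ye μ Λ τ x p * Ye μ Λ τ x r -
        (if p.1 = r.1 then 0 else Jf μ Λ τ p r * Ye μ Λ τ x p * Ye μ Λ τ x r) =
      (-(w μ Λ τ p * Ye μ Λ τ x p)) *
        (if ¬ r.1 = p.1 then w μ Λ τ r * Ye μ Λ τ x r else 0) := by
    intro r _
    unfold Kf
    by_cases h : p.1 = r.1
    · rw [if_pos h, if_pos h, if_neg (not_not_intro h.symm)]; ring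
    · rw [if_neg h, if_neg h, if_pos (fun h' => h h'.symm)]; ring
  rw [Finset.sum_congr rfl hc, ← Finset.mul_sum, hz, mul_zero]

end CrudeSI

namespace CrudeSI

variable {V : Type*} [Fintype V] [DecidableEq V] {q : ℕ}
variable {μ : Conf V q → ℝ} {Λ : Finset V} {τ : Conf V q}

lemma row_sum_Jf_ne (hd : IsDist μ) (hA : 0 < agreeProb μ Λ τ) {p : V × Fin q}
    (hp : p ∈ PF μ Λ τ) :
    ∑ r ∈ (PF μ Λ τ).filter (fun r => ¬ r.1 = p.1), Jf μ Λ τ p r =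
      ((Λᶜ.card : ℝ) - 1) * w μ Λ τ p := by
  have hpc : p.1 ∈ Λᶜ := Finset.mem_compl.mpr (mem_PF.mp hp).1
  have hmaps : ∀ r ∈ (PF μ Λ τ).filter (fun r => ¬ r.1 = p.1), r.1 ∈ Λᶜ.erase p.1 := by
    intro r hr
    rw [Finset.mem_filter] at hr
    exact Finset.mem_erase.mpr ⟨hr.2, Finset.mem_compl.mpr (mem_PF.mp hr.1).1⟩
  rw [← Finset.sum_fiberwise_of_maps_to hmaps (Jf μ Λ τ p)]
  have hfib : ∀ v ∈ Λᶜ.erase p.1,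
      ∑ r ∈ ((PF μ Λ τ).filter (fun r => ¬ r.1 = p.1)).filter (fun r => r.1 = v),
        Jf μ Λ τ p r = w μ Λ τ p := by
    intro v hv
    rw [Finset.mem_erase] at hv
    have : ((PF μ Λ τ).filter (fun r => ¬ r.1 = p.1)).filter (fun r => r.1 = v) =
        (PF μ Λ τ).filter (fun r => r.1 = v) := by
      rw [Finset.filter_filter]
      ext r
      simp only [Finset.mem_filter]
      constructor
      · rintro ⟨h1, _, h3⟩; exact ⟨h1, h3⟩
      · rintro ⟨h1, h2⟩; exact ⟨h1, fun hc => hv.1 (h2 ▸ hc ▸ rfl), h2⟩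
    rw [this]
    exact sum_fiber_Jf hd hA p (Finset.mem_compl.mp hv.2)
  rw [Finset.sum_congr rfl hfib, Finset.sum_const, nsmul_eq_mul,
    Finset.card_erase_of_mem hpc, Nat.cast_sub (Finset.card_pos.mpr ⟨p.1, hpc⟩), Nat.cast_one]

/-- The Dirichlet-form decomposition:
`∑∑_{u≠v} J y y = (m-1) ∑ w y² - D/2`. -/
lemma TJ_eq (hd : IsDist μ) (hA : 0 < agreeProb μ Λ τ) (x : Pairs μ Λ τ → ℝ) :
    ∑ p ∈ PF μ Λ τ, ∑ r ∈ PF μ Λ τ,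
        (if p.1 = r.1 then 0 else Jf μ Λ τ p r * Ye μ Λ τ x p * Ye μ Λ τ x r) =
      ((Λᶜ.card : ℝ) - 1) * (∑ p ∈ PF μ Λ τ, w μ Λ τ p * (Ye μ Λ τ x p) ^ 2) -
      (∑ p ∈ PF μ Λ τ, ∑ r ∈ PF μ Λ τ,
        (if p.1 = r.1 then 0 else Jf μ Λ τ p r * (Ye μ Λ τ x p - Ye μ Λ τ x r) ^ 2)) / 2 := by
  set Y := Ye μ Λ τ x with hY
  have key1 : ∀ (g : (V × Fin q) → ℝ), ∑ p ∈ PF μ Λ τ, ∑ r ∈ PF μ Λ τ,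
      (if p.1 = r.1 then 0 else Jf μ Λ τ p r * g p) =
      ((Λᶜ.card : ℝ) - 1) * ∑ p ∈ PF μ Λ τ, w μ Λ τ p * g p := by
    intro g
    rw [Finset.mul_sum]
    apply Finset.sum_congr rfl
    intro p hp
    have : ∀ r ∈ PF μ Λ τ, (if p.1 = r.1 then 0 else Jf μ Λ τ p r * g p) =
        (if ¬ r.1 = p.1 then Jf μ Λ τ p r else 0) * g p := by
      intro r _
      by_cases h : p.1 = r.1
      · rw [if_pos h, if_neg (not_not_intro h.symm), zero_mul]
      · rw [if_neg h, if_pos (fun h' => h h'.symm)]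
    rw [Finset.sum_congr rfl this, ← Finset.sum_mul, ← Finset.sum_filter,
      row_sum_Jf_ne hd hA hp]
    ring
  have key2 : ∑ p ∈ PF μ Λ τ, ∑ r ∈ PF μ Λ τ,
      (if p.1 = r.1 then 0 else Jf μ Λ τ p r * (Y r) ^ 2) =
      ((Λᶜ.card : ℝ) - 1) * ∑ p ∈ PF μ Λ τ, w μ Λ τ p * (Y p) ^ 2 := by
    rw [Finset.sum_comm]
    rw [← key1 (fun p => (Y p) ^ 2)]
    apply Finset.sum_congr rfl
    intro r _
    apply Finset.sum_congr rfl
    intro p _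
    by_cases h : p.1 = r.1
    · rw [if_pos h, if_pos h.symm]
    · rw [if_neg h, if_neg (fun h' => h h'.symm), Jf_symm]
  have key1' := key1 (fun p => (Y p) ^ 2)
  have expand : ∀ p ∈ PF μ Λ τ, ∀ r ∈ PF μ Λ τ,
      (if p.1 = r.1 then 0 else Jf μ Λ τ p r * (Y p - Y r) ^ 2) =
      (if p.1 = r.1 then 0 else Jf μ Λ τ p r * (Y p) ^ 2) +
      (if p.1 = r.1 then 0 else Jf μ Λ τ p r * (Y r) ^ 2) -
      2 * (if p.1 = r.1 then 0 else Jf μ Λ τ p r * Y p * Y r) := by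
    intro p _ r _
    by_cases h : p.1 = r.1
    · simp [if_pos h]
    · rw [if_neg h, if_neg h, if_neg h, if_neg h]; ring
  have hD : ∑ p ∈ PF μ Λ τ, ∑ r ∈ PF μ Λ τ,
      (if p.1 = r.1 then 0 else Jf μ Λ τ p r * (Y p - Y r) ^ 2) =
      2 * (((Λᶜ.card : ℝ) - 1) * ∑ p ∈ PF μ Λ τ, w μ Λ τ p * (Y p) ^ 2) -
      2 * ∑ p ∈ PF μ Λ τ, ∑ r ∈ PF μ Λ τ,
        (if p.1 = r.1 then 0 else Jf μ Λ τ p r * Y p * Y r) := by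
    rw [Finset.sum_congr rfl (fun p hp => Finset.sum_congr rfl (expand p hp))]
    have : ∀ p ∈ PF μ Λ τ, ∑ r ∈ PF μ Λ τ,
        ((if p.1 = r.1 then 0 else Jf μ Λ τ p r * (Y p) ^ 2) +
        (if p.1 = r.1 then 0 else Jf μ Λ τ p r * (Y r) ^ 2) -
        2 * (if p.1 = r.1 then 0 else Jf μ Λ τ p r * Y p * Y r)) =
        (∑ r ∈ PF μ Λ τ, (if p.1 = r.1 then 0 else Jf μ Λ τ p r * (Y p) ^ 2)) +
        (∑ r ∈ PF μ Λ τ, (if p.1 = r.1 then 0 else Jf μ Λ τ p r * (Y r) ^ 2)) -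
        2 * ∑ r ∈ PF μ Λ τ, (if p.1 = r.1 then 0 else Jf μ Λ τ p r * Y p * Y r) := by
      intro p _
      rw [Finset.sum_sub_distrib, Finset.sum_add_distrib, Finset.mul_sum]
    rw [Finset.sum_congr rfl this, Finset.sum_sub_distrib, Finset.sum_add_distrib,
      ← Finset.mul_sum, key1', key2]
    ring
  rw [hD]
  ring

end CrudeSI

namespace CrudeSI

variable {V : Type*} [Fintype V] [DecidableEq V] {q : ℕ}

/-- telescoping/Cauchy–Schwarz bound along a walk -/
lemma walk_bound {α : Type*} {G : SimpleGraph α} (y : α → ℝ) :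
    ∀ {p r : α} (W : G.Walk p r),
      (y p - y r) ^ 2 ≤
        W.length * ((W.darts.map (fun d => (y d.toProd.1 - y d.toProd.2) ^ 2)).sum) := by
  intro p r W
  induction W with
  | nil => simp
  | @cons a c r had W' ih =>
    rw [SimpleGraph.Walk.length_cons, SimpleGraph.Walk.darts_cons, List.map_cons,
      List.sum_cons]
    set L := W'.length with hL
    set S := ((W'.darts.map (fun d => (y d.toProd.1 - y d.toProd.2) ^ 2)).sum) with hS
    have hSnn : 0 ≤ S := by
      apply List.sum_nonneg
      intro z hz
      rw [List.mem_map] at hz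
      obtain ⟨d, _, rfl⟩ := hz
      positivity
    set A := y a - y c with hA
    set B := y c - y r with hB
    have hy : y a - y r = A + B := by rw [hA, hB]; ring
    rw [hy]
    push_cast
    rcases Nat.eq_zero_or_pos L with h0 | hpos
    · have hb2 : B ^ 2 ≤ 0 := by simpa [h0] using ih
      have hB0 : B = 0 := by nlinarith [sq_nonneg B]
      rw [hB0]
      have : (0:ℝ) ≤ (L:ℝ) * S := by positivity
      nlinarith [sq_nonneg A]
    · have hih : B ^ 2 ≤ (L:ℝ) * S := ih
      have hLpos : (1:ℝ) ≤ (L:ℝ) := by exact_mod_cast hpos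
      have key : (L:ℝ) * (A + B)^2 ≤ (L:ℝ) * (((L:ℝ)+1) * (A^2 + S)) := by
        nlinarith [sq_nonneg ((L:ℝ) * A - B), sq_nonneg B]
      have hLpos' : (0:ℝ) < (L:ℝ) := by linarith
      have := (mul_le_mul_iff_right₀ hLpos').mp key
      nlinarith [this]

variable {μ : Conf V q → ℝ} {Λ : Finset V} {τ : Conf V q}

/-- The graph on consistent vertex-spin pairs. -/
def Gp (μ : Conf V q → ℝ) (Λ : Finset V) (τ : Conf V q) :
    SimpleGraph {p : V × Fin q // p ∈ PF μ Λ τ} where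
  Adj s t := ¬ (s.1.1 = t.1.1) ∧ 0 < Jf μ Λ τ s.1 t.1
  symm := by
    constructor
    rintro s t ⟨h1, h2⟩
    exact ⟨fun h => h1 h.symm, by rwa [Jf_symm] at h2⟩
  loopless := by constructor; rintro s ⟨h1, _⟩; exact h1 rfl

abbrev Good (μ : Conf V q → ℝ) (Λ : Finset V) (τ : Conf V q) (σ : Conf V q) : Prop :=
  0 < μ σ ∧ ∀ v ∈ Λ, σ v = τ v

lemma exists_of_condProb_pos (hA : 0 < agreeProb μ Λ τ) {E : Conf V q → Prop}
    (h : 0 < condProb μ Λ τ E) :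
    ∃ σ : Conf V q, Good μ Λ τ σ ∧ E σ := by
  unfold condProb at h
  have hN : 0 < ∑ σ ∈ univ.filter (fun σ : Conf V q => E σ ∧ ∀ v ∈ Λ, σ v = τ v), μ σ := by
    by_contra hc
    push_neg at hc
    exact absurd (div_nonpos_of_nonpos_of_nonneg hc hA.le) (not_le.mpr h)
  by_contra hc
  push_neg at hc
  refine absurd hN (not_lt.mpr (Finset.sum_nonpos ?_))
  intro σ hσ
  rw [Finset.mem_filter] at hσ
  rcases le_or_gt (μ σ) 0 with hle | hgt
  · exact hle
  · exact absurd hσ.2.1 (hc σ ⟨hgt, hσ.2.2⟩)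

lemma condProb_pos_of_good (hd : IsDist μ) (hA : 0 < agreeProb μ Λ τ)
    {σ : Conf V q} (hσ : Good μ Λ τ σ) {E : Conf V q → Prop} (hE : E σ) :
    0 < condProb μ Λ τ E := by
  unfold condProb
  apply div_pos ?_ hA
  have hmem : σ ∈ univ.filter (fun σ' : Conf V q => E σ' ∧ ∀ v ∈ Λ, σ' v = τ v) := by
    rw [Finset.mem_filter]
    exact ⟨Finset.mem_univ _, hE, hσ.2⟩
  calc (0:ℝ) < μ σ := hσ.1
  _ ≤ _ := Finset.single_le_sum (fun σ' _ => hd.1 σ') hmem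

lemma mem_PF_of_good (hd : IsDist μ) (hA : 0 < agreeProb μ Λ τ)
    {σ : Conf V q} (hσ : Good μ Λ τ σ) {z : V} (hz : z ∉ Λ) :
    (z, σ z) ∈ PF μ Λ τ :=
  mem_PF.mpr ⟨hz, condProb_pos_of_good hd hA hσ rfl⟩

def pairOf (hd : IsDist μ) (hA : 0 < agreeProb μ Λ τ)
    {σ : Conf V q} (hσ : Good μ Λ τ σ) {z : V} (hz : z ∉ Λ) :
    {p : V × Fin q // p ∈ PF μ Λ τ} :=
  ⟨(z, σ z), mem_PF_of_good hd hA hσ hz⟩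

lemma adj_of_good (hd : IsDist μ) (hA : 0 < agreeProb μ Λ τ)
    {σ : Conf V q} (hσ : Good μ Λ τ σ) {z z' : V} (hz : z ∉ Λ) (hz' : z' ∉ Λ)
    (hne : z ≠ z') :
    (Gp μ Λ τ).Adj (pairOf hd hA hσ hz) (pairOf hd hA hσ hz') := by
  refine ⟨hne, ?_⟩
  exact condProb_pos_of_good hd hA hσ ⟨rfl, rfl⟩

lemma step_reach (hd : IsDist μ) (hA : 0 < agreeProb μ Λ τ) (hcard : 1 < Λᶜ.card)
    {σ σ' : Conf V q} (hσ : Good μ Λ τ σ) (hσ' : Good μ Λ τ σ')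
    (hdiff : differOne σ σ') {z : V} (hz : z ∉ Λ) :
    (Gp μ Λ τ).Reachable (pairOf hd hA hσ hz) (pairOf hd hA hσ' hz) := by
  obtain ⟨v, hvne, hvagree⟩ := hdiff
  by_cases hzv : z = v
  · obtain ⟨z', hz'mem, hz'ne⟩ := Finset.exists_mem_ne hcard z
    have hz' : z' ∉ Λ := Finset.mem_compl.mp hz'mem
    have h1 : (Gp μ Λ τ).Reachable (pairOf hd hA hσ hz) (pairOf hd hA hσ hz') :=
      (adj_of_good hd hA hσ hz hz' (fun h => hz'ne h.symm)).reachable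
    have heq : pairOf hd hA hσ hz' = pairOf hd hA hσ' hz' := by
      apply Subtype.ext
      unfold pairOf
      simp only
      rw [hvagree z' (hzv ▸ hz'ne)]
    have h2 : (Gp μ Λ τ).Reachable (pairOf hd hA hσ' hz') (pairOf hd hA hσ' hz) :=
      (adj_of_good hd hA hσ' hz' hz (fun h => hz'ne h)).reachable
    exact (h1.trans (heq ▸ SimpleGraph.Reachable.refl _)).trans h2
  · have heq : pairOf hd hA hσ hz = pairOf hd hA hσ' hz := by
      apply Subtype.ext
      unfold pairOf
      simp only
      rw [hvagree z hzv]
    exact heq ▸ SimpleGraph.Reachable.refl _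

lemma chain_reach (hd : IsDist μ) (hA : 0 < agreeProb μ Λ τ) (hcard : 1 < Λᶜ.card)
    {σ₁ σ₂ : Conf V q}
    (h : Relation.ReflTransGen
      (fun a b => 0 < μ a ∧ 0 < μ b ∧ (∀ v ∈ Λ, a v = τ v) ∧ (∀ v ∈ Λ, b v = τ v) ∧
        differOne a b) σ₁ σ₂)
    (h1 : Good μ Λ τ σ₁) {z : V} (hz : z ∉ Λ) :
    ∀ (h2 : Good μ Λ τ σ₂),
      (Gp μ Λ τ).Reachable (pairOf hd hA h1 hz) (pairOf hd hA h2 hz) := by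
  induction h with
  | refl =>
    intro h2
    have : pairOf hd hA h1 hz = pairOf hd hA h2 hz := Subtype.ext rfl
    exact this ▸ SimpleGraph.Reachable.refl _
  | tail hab hbc ih =>
    intro h2
    have hgb : Good μ Λ τ _ := ⟨hbc.1, hbc.2.2.1⟩
    exact (ih hgb).trans (step_reach hd hA hcard hgb h2 hbc.2.2.2.2 hz)

lemma exists_good (hd : IsDist μ) (hA : 0 < agreeProb μ Λ τ) {p : V × Fin q}
    (hp : p ∈ PF μ Λ τ) :
    ∃ σ : Conf V q, Good μ Λ τ σ ∧ σ p.1 = p.2 :=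
  exists_of_condProb_pos hA (mem_PF.mp hp).2

lemma pair_reach (hd : IsDist μ) (hA : 0 < agreeProb μ Λ τ) (htc : TotallyConnected μ)
    (hcard : 1 < Λᶜ.card) (s t : {p : V × Fin q // p ∈ PF μ Λ τ}) :
    (Gp μ Λ τ).Reachable s t := by
  obtain ⟨σ₁, hg1, he1⟩ := exists_good hd hA s.2
  obtain ⟨σ₂, hg2, he2⟩ := exists_good hd hA t.2
  have hchain := htc Λ τ hA σ₁ σ₂ hg1.1 hg1.2 hg2.1 hg2.2
  have hz1 : s.1.1 ∉ Λ := (mem_PF.mp s.2).1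
  have hz2 : t.1.1 ∉ Λ := (mem_PF.mp t.2).1
  have hr := chain_reach hd hA hcard hchain hg1 hz1 hg2
  have hs : pairOf hd hA hg1 hz1 = s := by
    apply Subtype.ext
    unfold pairOf
    simp only
    rw [he1]
  rw [hs] at hr
  by_cases hv : s.1.1 = t.1.1
  · have : pairOf hd hA hg2 hz1 = t := by
      apply Subtype.ext
      unfold pairOf
      simp only
      rw [hv, he2]
    rwa [this] at hr
  · refine hr.trans ?_
    have hadj := adj_of_good hd hA hg2 hz1 hz2 (fun h => hv h)
    have : pairOf hd hA hg2 hz2 = t := by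
      apply Subtype.ext
      unfold pairOf
      simp only
      rw [he2]
    exact this ▸ hadj.reachable

end CrudeSI

namespace CrudeSI

variable {V : Type*} [Fintype V] [DecidableEq V] {q : ℕ}
variable {μ : Conf V q → ℝ} {Λ : Finset V} {τ : Conf V q}

lemma exists_neg_of_sum_zero {β : Type*} {s : Finset β} {f : β → ℝ}
    (hsum : ∑ i ∈ s, f i = 0) {j : β} (hj : j ∈ s) (hpos : 0 < f j) :
    ∃ i ∈ s, f i < 0 := by
  by_contra hc
  push_neg at hc
  have := Finset.sum_pos' hc ⟨j, hj, hpos⟩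
  linarith

set_option maxHeartbeats 2000000 in
lemma poincare {b : ℝ} (hb : 0 < b) (hd : IsDist μ) (hm : MargBounded b μ)
    (htc : TotallyConnected μ) (hA : 0 < agreeProb μ Λ τ) (x : Pairs μ Λ τ → ℝ) :
    4 * b ^ 4 * ((Λᶜ.card : ℝ) - 1) *
        (∑ p ∈ PF μ Λ τ, w μ Λ τ p * (Ye μ Λ τ x p) ^ 2) ≤
      (Λᶜ.card : ℝ) ^ 4 * (∑ p ∈ PF μ Λ τ, ∑ r ∈ PF μ Λ τ,
        (if p.1 = r.1 then 0
         else Jf μ Λ τ p r * (Ye μ Λ τ x p - Ye μ Λ τ x r) ^ 2)) := by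
  set Y := Ye μ Λ τ x with hYdef
  set Sw := ∑ p ∈ PF μ Λ τ, w μ Λ τ p * (Y p) ^ 2 with hSwdef
  set D := ∑ p ∈ PF μ Λ τ, ∑ r ∈ PF μ Λ τ,
      (if p.1 = r.1 then 0 else Jf μ Λ τ p r * (Y p - Y r) ^ 2) with hDdef
  have hDnn : 0 ≤ D := by
    apply Finset.sum_nonneg
    intro p _
    apply Finset.sum_nonneg
    intro r _
    by_cases h : p.1 = r.1
    · rw [if_pos h]
    · rw [if_neg h]
      exact mul_nonneg (Jf_nonneg hd p r) (sq_nonneg _)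
  have hSwnn : 0 ≤ Sw := by
    apply Finset.sum_nonneg
    intro p _
    exact mul_nonneg (w_nonneg hd p) (sq_nonneg _)
  set m := (Λᶜ.card : ℝ) with hmdef
  have hmnn : 0 ≤ m := Nat.cast_nonneg _
  rcases lt_or_ge Λᶜ.card 2 with hcard | hcard
  · -- degenerate cases m = 0 or m = 1
    interval_cases h : Λᶜ.card
    · -- m = 0 : PF is empty
      have hPF : PF μ Λ τ = ∅ := by
        rw [Finset.eq_empty_iff_forall_notMem]
        intro p hp
        have : p.1 ∈ Λᶜ := Finset.mem_compl.mpr (mem_PF.mp hp).1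
        rw [Finset.card_eq_zero.mp h] at this
        exact absurd this (Finset.notMem_empty _)
      have : Sw = 0 := by rw [hSwdef, hPF]; simp
      rw [this, mul_zero]
      have : (0:ℝ) ≤ m ^ 4 * D := mul_nonneg (by positivity) hDnn
      linarith
    · -- m = 1
      have : m - 1 = 0 := by rw [hmdef]; norm_num
      rw [this, mul_zero, zero_mul]
      exact mul_nonneg (by positivity) hDnn
  · -- main case : m ≥ 2
    have hm2 : (2:ℝ) ≤ m := by rw [hmdef]; exact_mod_cast hcard
    have hcoef : 0 ≤ 4 * b ^ 4 * (m - 1) := by nlinarith [pow_pos hb 4]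
    rcases eq_or_lt_of_le hSwnn with hSw0 | hSwpos
    · rw [← hSw0, mul_zero]
      exact mul_nonneg (by positivity) hDnn
    -- PF nonempty and a maximizing pair p⋆
    have hPFne : (PF μ Λ τ).Nonempty := by
      rcases Finset.eq_empty_or_nonempty (PF μ Λ τ) with he | hn
      · rw [hSwdef, he] at hSwpos; simp at hSwpos
      · exact hn
    obtain ⟨ps, hps, hmax⟩ := Finset.exists_max_image (PF μ Λ τ) (fun p => (Y p) ^ 2) hPFne
    have hwps : 0 < w μ Λ τ ps := (mem_PF.mp hps).2
    have hb1 : b ≤ 1 := le_trans (b_le_w hm hA hps) (w_le_one hd hA ps)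
    have hbN : b * ((PF μ Λ τ).card : ℝ) ≤ m := b_card_PF hd hm hA
    -- M² > 0
    have hMpos : 0 < (Y ps) ^ 2 := by
      by_contra hc
      push_neg at hc
      have hY0 : ∀ p ∈ PF μ Λ τ, (Y p) ^ 2 = 0 := by
        intro p hp
        have h1 := hmax p hp
        have h2 := sq_nonneg (Y p)
        linarith
      have : Sw = 0 := by
        rw [hSwdef]
        apply Finset.sum_eq_zero
        intro p hp
        rw [hY0 p hp, mul_zero]
      linarith
    have hYps : Y ps ≠ 0 := by
      intro h
      rw [h] at hMpos
      simp at hMpos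
    -- opposite sign partner r⋆ at the same vertex
    have hfz := sum_fiber_wY hd hA x (mem_PF.mp hps).1
    have hpsfib : ps ∈ (PF μ Λ τ).filter (fun r => r.1 = ps.1) :=
      Finset.mem_filter.mpr ⟨hps, rfl⟩
    have hrs : ∃ rs ∈ (PF μ Λ τ).filter (fun r => r.1 = ps.1), Y ps * Y rs ≤ 0 := by
      rcases lt_or_gt_of_ne hYps with hneg | hpos
      · obtain ⟨rs, hrsmem, hrsneg⟩ := exists_neg_of_sum_zero
          (f := fun r => -(w μ Λ τ r * Y r))
          (by rw [Finset.sum_neg_distrib, hfz, neg_zero]) hpsfib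
          (show 0 < -(w μ Λ τ ps * Y ps) by nlinarith)
        refine ⟨rs, hrsmem, ?_⟩
        have hrsneg' : 0 < w μ Λ τ rs * Y rs := by
          have : -(w μ Λ τ rs * Y rs) < 0 := hrsneg
          linarith
        have hwrs := w_nonneg hd (μ := μ) (Λ := Λ) (τ := τ) rs
        have hYrs : 0 < Y rs := by
          rcases le_or_gt (Y rs) 0 with h | h
          · nlinarith
          · exact h
        nlinarith
      · obtain ⟨rs, hrsmem, hrsneg⟩ := exists_neg_of_sum_zero
          (f := fun r => w μ Λ τ r * Y r) hfz hpsfib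
          (show 0 < w μ Λ τ ps * Y ps by nlinarith)
        refine ⟨rs, hrsmem, ?_⟩
        have hrsneg' : w μ Λ τ rs * Y rs < 0 := hrsneg
        have hwrs := w_nonneg hd (μ := μ) (Λ := Λ) (τ := τ) rs
        have hYrs : Y rs < 0 := by
          rcases le_or_gt 0 (Y rs) with h | h
          · nlinarith
          · exact h
        nlinarith
    obtain ⟨rs, hrsfib, hprod⟩ := hrs
    have hrsPF : rs ∈ PF μ Λ τ := (Finset.mem_filter.mp hrsfib).1
    have hM2le : (Y ps) ^ 2 ≤ (Y ps - Y rs) ^ 2 := by nlinarith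
    -- reachability and walk
    have hcard1 : 1 < Λᶜ.card := hcard
    have hreach := pair_reach hd hA htc hcard1 ⟨ps, hps⟩ ⟨rs, hrsPF⟩
    set W := hreach.some.bypass with hWdef
    have hWpath : W.IsPath := SimpleGraph.Walk.bypass_isPath _
    have hlen : (W.length : ℝ) ≤ ((PF μ Λ τ).card : ℝ) := by
      have := hWpath.length_lt
      rw [Fintype.card_coe] at this
      exact_mod_cast this.le
    set y : {p : V × Fin q // p ∈ PF μ Λ τ} → ℝ := fun s => Y s.1 with hydef
    have hwalk := walk_bound y W
    set dsum := ((W.darts.map (fun d => (y d.toProd.1 - y d.toProd.2) ^ 2)).sum)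
      with hdsumdef
    have hdsumnn : 0 ≤ dsum := by
      apply List.sum_nonneg
      intro z hz
      rw [List.mem_map] at hz
      obtain ⟨d, _, rfl⟩ := hz
      exact sq_nonneg _
    -- adjacency Dirichlet sum
    set F2 : (V × Fin q) → (V × Fin q) → ℝ := fun p r =>
      if ¬ p.1 = r.1 ∧ 0 < Jf μ Λ τ p r then (Y p - Y r) ^ 2 else 0 with hF2def
    set Dadj := ∑ p ∈ PF μ Λ τ, ∑ r ∈ PF μ Λ τ, F2 p r with hDadjdef
    have hF2nn : ∀ p r, 0 ≤ F2 p r := by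
      intro p r
      simp only [hF2def]
      split
      · positivity
      · exact le_rfl
    have hDadjnn : 0 ≤ Dadj :=
      Finset.sum_nonneg fun p _ => Finset.sum_nonneg fun r _ => hF2nn p r
    -- darts sum is at most Dadj
    have hdsum_le : dsum ≤ Dadj := by
      have hnodup : W.darts.Nodup :=
        List.Nodup.of_map SimpleGraph.Dart.edge hWpath.isTrail.edges_nodup
      rw [hdsumdef, ← List.sum_toFinset _ hnodup]
      have himg : W.darts.toFinset.sum (fun d => (y d.toProd.1 - y d.toProd.2) ^ 2) =
          ∑ z ∈ W.darts.toFinset.image SimpleGraph.Dart.toProd,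
            (y z.1 - y z.2) ^ 2 := by
        rw [Finset.sum_image
          (fun a _ c _ h => SimpleGraph.Dart.toProd_injective h)]
      rw [himg]
      have hsub : ∑ z ∈ W.darts.toFinset.image SimpleGraph.Dart.toProd,
          (y z.1 - y z.2) ^ 2 ≤
          ∑ z : {p : V × Fin q // p ∈ PF μ Λ τ} × {p : V × Fin q // p ∈ PF μ Λ τ},
            F2 z.1.1 z.2.1 := by
        rw [show ∑ z ∈ W.darts.toFinset.image SimpleGraph.Dart.toProd,
            (y z.1 - y z.2) ^ 2 =
            ∑ z ∈ W.darts.toFinset.image SimpleGraph.Dart.toProd, F2 z.1.1 z.2.1 from ?_]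
        · exact Finset.sum_le_sum_of_subset_of_nonneg (Finset.subset_univ _)
            (fun z _ _ => hF2nn z.1.1 z.2.1)
        · apply Finset.sum_congr rfl
          intro z hz
          rw [Finset.mem_image] at hz
          obtain ⟨d, _, rfl⟩ := hz
          have hadj := d.adj
          simp only [hF2def, hydef]
          rw [if_pos ⟨hadj.1, hadj.2⟩]
      refine le_trans hsub (le_of_eq ?_)
      rw [hDadjdef, Fintype.sum_prod_type]
      rw [show (∑ s : {p : V × Fin q // p ∈ PF μ Λ τ},
          ∑ t : {p : V × Fin q // p ∈ PF μ Λ τ}, F2 s.1 t.1) =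
          ∑ s : {p : V × Fin q // p ∈ PF μ Λ τ}, ∑ r ∈ PF μ Λ τ, F2 s.1 r from
        Finset.sum_congr rfl (fun s _ => Finset.sum_coe_sort _ (fun r => F2 s.1 r))]
      exact Finset.sum_coe_sort _ (fun p => ∑ r ∈ PF μ Λ τ, F2 p r)
    -- b² Dadj ≤ D
    have hbD : b * b * Dadj ≤ D := by
      rw [hDadjdef, hDdef, Finset.mul_sum]
      apply Finset.sum_le_sum
      intro p hp
      rw [Finset.mul_sum]
      apply Finset.sum_le_sum
      intro r hr
      simp only [hF2def]
      by_cases h : p.1 = r.1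
      · rw [if_pos h, if_neg (fun hc : ¬ p.1 = r.1 ∧ _ => hc.1 h), mul_zero]
      · rw [if_neg h]
        by_cases hJ : 0 < Jf μ Λ τ p r
        · rw [if_pos ⟨h, hJ⟩]
          have hbJ := b_sq_le_Jf hb.le hd hm hA hp (mem_PF.mp hr).1 h hJ
          nlinarith [sq_nonneg (Y p - Y r)]
        · rw [if_neg (fun hc : ¬ p.1 = r.1 ∧ _ => hJ hc.2), mul_zero]
          exact mul_nonneg (Jf_nonneg hd p r) (sq_nonneg _)
    -- assemble all inequalities
    set N := ((PF μ Λ τ).card : ℝ) with hNdef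
    have hNnn : (0:ℝ) ≤ N := Nat.cast_nonneg _
    have hM2D : (Y ps) ^ 2 ≤ N * Dadj := by
      have h1 : (Y ps - Y rs) ^ 2 ≤ (W.length : ℝ) * dsum := hwalk
      have h2 : (W.length : ℝ) * dsum ≤ N * Dadj := by
        have := mul_le_mul hlen hdsum_le hdsumnn hNnn
        exact this
      linarith
    have hSwM : Sw ≤ m * (Y ps) ^ 2 := by
      rw [hSwdef]
      calc ∑ p ∈ PF μ Λ τ, w μ Λ τ p * (Y p) ^ 2
          ≤ ∑ p ∈ PF μ Λ τ, w μ Λ τ p * (Y ps) ^ 2 := by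
            apply Finset.sum_le_sum
            intro p hp
            exact mul_le_mul_of_nonneg_left (hmax p hp) (w_nonneg hd p)
      _ = m * (Y ps) ^ 2 := by rw [← Finset.sum_mul, sum_w_PF hd hA]
    have c1 : Sw ≤ m * (N * Dadj) :=
      le_trans hSwM (mul_le_mul_of_nonneg_left hM2D hmnn)
    have c2 : 4 * b ^ 4 * (m - 1) * Sw ≤ 4 * b ^ 4 * (m - 1) * (m * (N * Dadj)) :=
      mul_le_mul_of_nonneg_left c1 hcoef
    have c4 : b * (b * N) ≤ 1 * m := by
      have h0 : 0 ≤ b * N := mul_nonneg hb.le hNnn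
      calc b * (b * N) ≤ 1 * (b * N) := mul_le_mul_of_nonneg_right hb1 h0
      _ ≤ 1 * m := by rw [one_mul, one_mul]; exact hbN
    have c5 : b * (b * N) * (b * b * Dadj) ≤ m * D := by
      have h0 : 0 ≤ b * b * Dadj := mul_nonneg (mul_nonneg hb.le hb.le) hDadjnn
      calc b * (b * N) * (b * b * Dadj) ≤ (1 * m) * (b * b * Dadj) :=
            mul_le_mul_of_nonneg_right c4 h0
      _ = m * (b * b * Dadj) := by ring
      _ ≤ m * D := mul_le_mul_of_nonneg_left hbD hmnn
    have c6 : 4 * b ^ 4 * (m - 1) * (m * (N * Dadj)) =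
        4 * (m - 1) * m * (b * (b * N) * (b * b * Dadj)) := by ring
    have c7 : 4 * (m - 1) * m * (b * (b * N) * (b * b * Dadj)) ≤
        4 * (m - 1) * m * (m * D) := by
      apply mul_le_mul_of_nonneg_left c5
      nlinarith
    have c8 : 4 * (m - 1) * m * (m * D) ≤ m ^ 4 * D := by
      have hkey : 0 ≤ (m - 2) ^ 2 * m ^ 2 * D :=
        mul_nonneg (mul_nonneg (sq_nonneg _) (sq_nonneg _)) hDnn
      nlinarith [hkey]
    linarith [c2, c6 ▸ c2, c7, c8]

end CrudeSI

namespace CrudeSI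

variable {V : Type*} [Fintype V] [DecidableEq V] {q : ℕ}
variable {μ : Conf V q → ℝ} {Λ : Finset V} {τ : Conf V q}

lemma eigen_form (hA : 0 < agreeProb μ Λ τ) {x : Pairs μ Λ τ → ℝ} {lam : ℝ}
    (heig : (influence μ Λ τ).mulVec x = lam • x) :
    lam * (∑ p ∈ PF μ Λ τ, w μ Λ τ p * (Xe μ Λ τ x p) ^ 2) =
      ∑ p ∈ PF μ Λ τ, ∑ r ∈ PF μ Λ τ, Kf μ Λ τ p r * Xe μ Λ τ x p * Xe μ Λ τ x r := by
  have hmv : ∀ p : Pairs μ Λ τ, ∑ r : Pairs μ Λ τ, influence μ Λ τ p r * x r = lam * x p := by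
    intro p
    have h := congrFun heig p
    rw [Matrix.mulVec, dotProduct] at h
    rw [h]
    simp
  have step1 : lam * (∑ p ∈ PF μ Λ τ, w μ Λ τ p * (Xe μ Λ τ x p) ^ 2) =
      ∑ p ∈ PF μ Λ τ, lam * (w μ Λ τ p * (Xe μ Λ τ x p) ^ 2) := Finset.mul_sum _ _ _
  have step2 : ∑ p ∈ PF μ Λ τ, lam * (w μ Λ τ p * (Xe μ Λ τ x p) ^ 2) =
      ∑ p : Pairs μ Λ τ, lam * (w μ Λ τ p.1 * (Xe μ Λ τ x p.1) ^ 2) :=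
    (sum_pairs (fun p => lam * (w μ Λ τ p * (Xe μ Λ τ x p) ^ 2))).symm
  have step3 : ∀ p : Pairs μ Λ τ, lam * (w μ Λ τ p.1 * (Xe μ Λ τ x p.1) ^ 2) =
      ∑ r : Pairs μ Λ τ, Kf μ Λ τ p.1 r.1 * Xe μ Λ τ x p.1 * Xe μ Λ τ x r.1 := by
    intro p
    rw [Xe_coe]
    have : lam * (w μ Λ τ p.1 * (x p) ^ 2) = w μ Λ τ p.1 * x p * (lam * x p) := by ring
    rw [this, ← hmv p, Finset.mul_sum]
    apply Finset.sum_congr rfl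
    intro r _
    rw [Xe_coe, ← w_mul_influence hA p r]
    ring
  have step4 : ∀ p : Pairs μ Λ τ,
      (∑ r : Pairs μ Λ τ, Kf μ Λ τ p.1 r.1 * Xe μ Λ τ x p.1 * Xe μ Λ τ x r.1) =
      ∑ r ∈ PF μ Λ τ, Kf μ Λ τ p.1 r * Xe μ Λ τ x p.1 * Xe μ Λ τ x r := fun p =>
    sum_pairs (fun r => Kf μ Λ τ p.1 r * Xe μ Λ τ x p.1 * Xe μ Λ τ x r)
  rw [step1, step2, Finset.sum_congr rfl (fun p _ => (step3 p).trans (step4 p))]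
  exact sum_pairs (fun p => ∑ r ∈ PF μ Λ τ, Kf μ Λ τ p r * Xe μ Λ τ x p * Xe μ Λ τ x r)

lemma Sw_le_Sx (hd : IsDist μ) (hA : 0 < agreeProb μ Λ τ) (x : Pairs μ Λ τ → ℝ) :
    ∑ p ∈ PF μ Λ τ, w μ Λ τ p * (Ye μ Λ τ x p) ^ 2 ≤
      ∑ p ∈ PF μ Λ τ, w μ Λ τ p * (Xe μ Λ τ x p) ^ 2 := by
  rw [← sum_PF_fiberwise (fun p => w μ Λ τ p * (Ye μ Λ τ x p) ^ 2),
    ← sum_PF_fiberwise (fun p => w μ Λ τ p * (Xe μ Λ τ x p) ^ 2)]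
  apply Finset.sum_le_sum
  intro v hv
  have hvΛ : v ∉ Λ := Finset.mem_compl.mp hv
  have hexp : ∀ r ∈ (PF μ Λ τ).filter (fun r => r.1 = v),
      w μ Λ τ r * (Ye μ Λ τ x r) ^ 2 =
      w μ Λ τ r * (Xe μ Λ τ x r) ^ 2 -
        2 * cv μ Λ τ x v * (w μ Λ τ r * Xe μ Λ τ x r) +
        (cv μ Λ τ x v) ^ 2 * w μ Λ τ r := by
    intro r hr
    rw [Finset.mem_filter] at hr
    unfold Ye
    rw [hr.2]
    ring
  rw [Finset.sum_congr rfl hexp, Finset.sum_add_distrib, Finset.sum_sub_distrib,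
    ← Finset.mul_sum, ← Finset.mul_sum, sum_fiber_w hd hA hvΛ]
  have hc : ∑ r ∈ (PF μ Λ τ).filter (fun r => r.1 = v), w μ Λ τ r * Xe μ Λ τ x r =
      cv μ Λ τ x v := rfl
  rw [hc, mul_one]
  nlinarith [sq_nonneg (cv μ Λ τ x v)]

set_option maxHeartbeats 2000000 in
/-- The main spectral bound, in terms of the number of free vertices. -/
theorem main_bound {b : ℝ} (hb : 0 < b) (hd : IsDist μ) (hm : MargBounded b μ)
    (htc : TotallyConnected μ) (hA : 0 < agreeProb μ Λ τ)
    (lam : ℝ) (x : Pairs μ Λ τ → ℝ) (hx : x ≠ 0)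
    (heig : (influence μ Λ τ).mulVec x = lam • x) :
    lam ≤ ((Λᶜ.card : ℝ) - 1) * (1 - 2 * b ^ 4 / (Λᶜ.card : ℝ) ^ 4) := by
  obtain ⟨p₀, hp₀⟩ : ∃ p₀ : Pairs μ Λ τ, x p₀ ≠ 0 := by
    by_contra hc
    push_neg at hc
    exact hx (funext hc)
  have hp₀PF : p₀.1 ∈ PF μ Λ τ := mem_PF.mpr p₀.2
  set m := (Λᶜ.card : ℝ) with hmdef
  set Sx := ∑ p ∈ PF μ Λ τ, w μ Λ τ p * (Xe μ Λ τ x p) ^ 2 with hSxdef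
  set Sw := ∑ p ∈ PF μ Λ τ, w μ Λ τ p * (Ye μ Λ τ x p) ^ 2 with hSwdef
  set D := ∑ p ∈ PF μ Λ τ, ∑ r ∈ PF μ Λ τ,
      (if p.1 = r.1 then 0 else Jf μ Λ τ p r * (Ye μ Λ τ x p - Ye μ Λ τ x r) ^ 2)
      with hDdef
  have hSxpos : 0 < Sx := by
    rw [hSxdef]
    apply Finset.sum_pos' (fun p _ => mul_nonneg (w_nonneg hd p) (sq_nonneg _))
    refine ⟨p₀.1, hp₀PF, ?_⟩
    rw [Xe_coe]
    exact mul_pos (mem_PF.mp hp₀PF).2 (by positivity)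
  -- the chain of identities
  have hform : lam * Sx = ((Λᶜ.card : ℝ) - 1) * Sw - D / 2 := by
    rw [hSxdef, eigen_form hA heig, form_snd hd hA x (Xe μ Λ τ x),
      form_fst hd hA x (Ye μ Λ τ x), form_J hd hA x, TJ_eq hd hA x]
  -- Poincaré
  have hpoin := poincare hb hd hm htc hA x
  -- counting
  have hm1 : 1 ≤ Λᶜ.card := Finset.card_pos.mpr ⟨p₀.1.1, Finset.mem_compl.mpr p₀.2.1⟩
  have hm1R : (1:ℝ) ≤ m := by rw [hmdef]; exact_mod_cast hm1
  have hmpos : (0:ℝ) < m := lt_of_lt_of_le one_pos hm1R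
  have hm4pos : (0:ℝ) < m ^ 4 := by positivity
  have hb1 : b ≤ 1 := le_trans (b_le_w hm hA hp₀PF) (w_le_one hd hA p₀.1)
  have hSwnn : 0 ≤ Sw := Finset.sum_nonneg fun p _ =>
    mul_nonneg (w_nonneg hd p) (sq_nonneg _)
  -- key inequality : (m-1) * (2b⁴/m⁴) * Sw ≤ D / 2
  have hkey : (m - 1) * (2 * b ^ 4 / m ^ 4) * Sw ≤ D / 2 := by
    have h2m4 : (0:ℝ) < 2 * m ^ 4 := by positivity
    calc (m - 1) * (2 * b ^ 4 / m ^ 4) * Sw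
        = (4 * b ^ 4 * (m - 1) * Sw) / (2 * m ^ 4) := by
          field_simp
          ring
    _ ≤ (m ^ 4 * D) / (2 * m ^ 4) := (div_le_div_iff_of_pos_right h2m4).mpr hpoin
    _ = D / 2 := by
          field_simp
  have hcoef : 0 ≤ (m - 1) * (1 - 2 * b ^ 4 / m ^ 4) := by
    rcases eq_or_lt_of_le hm1R with h1 | h2
    · rw [← h1]
      norm_num
    · have hm2 : (2:ℝ) ≤ m := by
        have h1' : (1:ℕ) < Λᶜ.card := by
          rw [hmdef] at h2
          exact_mod_cast h2
        rw [hmdef]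
        exact_mod_cast h1'
      have hmsq : (4:ℝ) ≤ m ^ 2 := by nlinarith
      have h16 : (16:ℝ) ≤ m ^ 4 := by nlinarith [hmsq, sq_nonneg (m ^ 2 - 4)]
      have hbsq : b ^ 2 ≤ 1 := by nlinarith
      have hb4 : b ^ 4 ≤ 1 := by nlinarith [sq_nonneg (b ^ 2), hbsq]
      have : 2 * b ^ 4 / m ^ 4 ≤ 1 := by
        rw [div_le_one hm4pos]
        nlinarith
      nlinarith
  have hfin : lam * Sx ≤ ((m - 1) * (1 - 2 * b ^ 4 / m ^ 4)) * Sx := by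
    calc lam * Sx = (m - 1) * Sw - D / 2 := hform
    _ ≤ (m - 1) * Sw - (m - 1) * (2 * b ^ 4 / m ^ 4) * Sw := by linarith
    _ = ((m - 1) * (1 - 2 * b ^ 4 / m ^ 4)) * Sw := by ring
    _ ≤ ((m - 1) * (1 - 2 * b ^ 4 / m ^ 4)) * Sx :=
      mul_le_mul_of_nonneg_left (Sw_le_Sx hd hA x) hcoef
  exact le_of_mul_le_mul_right (by linarith [hfin]) hSxpos

end CrudeSI

open SpinGraph in
/-- For a totally-connected, `b`-marginally bounded distribution over
`[q]^n`, every (real) eigenvalue of the signed pairwise influence matrix of a pinning on a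
set of `k ≤ n-2` vertices is at most `(n-k-1)(1 - 2b^4/(n-k)^4)`. -/
theorem crude_spectral_independence (n Q : ℕ) (b : ℝ) (μ : Conf (Fin n) Q → ℝ)
    (hb : 0 < b) (hdist : IsDist μ) (htc : TotallyConnected μ) (hmarg : MargBounded b μ) :
    ∀ k : ℕ, k ≤ n - 2 →
      ∀ Λ : Finset (Fin n), Λ.card = k →
        ∀ τ : Conf (Fin n) Q, 0 < agreeProb μ Λ τ →
          ∀ (lam : ℝ) (x : Pairs μ Λ τ → ℝ), x ≠ 0 →
            (influence μ Λ τ).mulVec x = lam • x →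
            lam ≤ ((n : ℝ) - k - 1) * (1 - 2 * b ^ 4 / ((n : ℝ) - k) ^ 4) := by
  intro k hk Λ hΛ τ hA lam x hx heig
  have hkn : k ≤ n := le_trans hk (Nat.sub_le n 2)
  have hcard : Λᶜ.card = n - k := by
    rw [Finset.card_compl, hΛ, Fintype.card_fin]
  have hbound := CrudeSI.main_bound hb hdist hmarg htc hA lam x hx heig
  have hcast : ((Λᶜ.card : ℝ)) = (n : ℝ) - k := by
    rw [hcard, Nat.cast_sub hkn]
  rw [hcast] at hbound
  exact hbound
end
end
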